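/- arXiv:0706.4341 — 9 statements merged into one kernel-verified Lean document; each statement's English description precedes it below -/
import Mathlib

section
/- Let p be an odd prime and let q ∈ ℚ_p satisfy ‖1 - q‖_p < 1. Then for every positive integer d, every natural number N, and every natural number a, one has Σ_{i=0}^{p-1} (1+q)·(-1)^{a+i}·q^{a + i·d·p^N} / (1 + q^{d·p^{N+1}}) = (1+q)·(-1)^a·q^a / (1 + q^{d·p^N}). (In other words, the assignment μ_{-q}(a + d p^N ℤ_p) = (-q)^a/[d p^N]_{-q} is compatible under refinement of the cylinders a + d p^N ℤ_p, so μ_{-q} is a distribution.) -/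
/-- The assignment `μ_{-q}(a + d p^N ℤ_p) = (-q)^a / [d p^N]_{-q}` is compatible under
refinement of cylinders, i.e. `μ_{-q}` is a distribution. -/
theorem distribution_relation (p : ℕ) [Fact p.Prime] (hodd : Odd p)
    (q : ℚ_[p]) (hq : ‖1 - q‖ < 1)
    (d : ℕ) (hd : 0 < d) (N : ℕ) (a : ℕ) :
    ∑ i ∈ Finset.range p,
        (1 + q) * (-1 : ℚ_[p]) ^ (a + i) * q ^ (a + i * d * p ^ N) / (1 + q ^ (d * p ^ (N + 1)))
      = (1 + q) * (-1 : ℚ_[p]) ^ a * q ^ a / (1 + q ^ (d * p ^ N)) := by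
  have hp : p.Prime := Fact.out
  -- ‖q‖ ≤ 1
  have hnq : ‖q‖ ≤ 1 := by
    have := Padic.nonarchimedean (1 - q) q
    simp only [sub_add_cancel] at this
    have h := Padic.nonarchimedean (1 : ℚ_[p]) (-(1 - q))
    have hq' : (1 : ℚ_[p]) + -(1 - q) = q := by ring
    rw [hq', norm_neg] at h
    exact h.trans (by simp [le_of_lt hq])
  -- ‖1 - q^m‖ < 1 for all m
  have hnm : ∀ m : ℕ, ‖1 - q ^ m‖ < 1 := by
    intro m
    induction m with
    | zero => simpa using one_pos
    | succ n ih =>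
      have key : 1 - q ^ (n + 1) = (1 - q ^ n) + q ^ n * (1 - q) := by ring
      rw [key]
      refine lt_of_le_of_lt (Padic.nonarchimedean _ _) (max_lt ih ?_)
      calc ‖q ^ n * (1 - q)‖ = ‖q ^ n‖ * ‖1 - q‖ := norm_mul _ _
        _ ≤ 1 * ‖1 - q‖ := by
            apply mul_le_mul_of_nonneg_right _ (norm_nonneg _)
            simpa using pow_le_one₀ (norm_nonneg q) hnq
        _ < 1 := by simpa using hq
  -- 1 + q^m ≠ 0 for all m
  have hne : ∀ m : ℕ, (1 : ℚ_[p]) + q ^ m ≠ 0 := by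
    intro m h
    have h2 : (1 : ℚ_[p]) - q ^ m = 2 := by linear_combination -h
    have : ‖((2 : ℤ) : ℚ_[p])‖ < 1 := by
      push_cast; rw [← h2]; exact hnm m
    rw [Padic.norm_intCast_lt_one_iff] at this
    have := Int.le_of_dvd (by norm_num) this
    have hp2 : 2 < p := lt_of_le_of_ne hp.two_le (fun h => by
      rw [← h] at hodd; exact (Nat.not_odd_iff_even.mpr (by norm_num)) hodd)
    omega
  set x : ℚ_[p] := q ^ (d * p ^ N) with hx
  have hxp : q ^ (d * p ^ (N + 1)) = x ^ p := by
    rw [hx, ← pow_mul]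
    ring_nf
  have hx1 : (1 : ℚ_[p]) + x ≠ 0 := hne _
  have hxp1 : (1 : ℚ_[p]) + x ^ p ≠ 0 := by rw [← hxp]; exact hne _
  -- geometric sum identity
  have hg : (∑ i ∈ Finset.range p, (-x) ^ i) * (1 + x) = 1 + x ^ p := by
    have := geom_sum_mul (-x) p
    have hneg : (-x) ^ p = -(x ^ p) := hodd.neg_pow x
    rw [hneg] at this
    linear_combination -this
  -- rewrite each summand
  have hterm : ∀ i ∈ Finset.range p,
      (1 + q) * (-1 : ℚ_[p]) ^ (a + i) * q ^ (a + i * d * p ^ N) / (1 + q ^ (d * p ^ (N + 1)))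
        = (1 + q) * (-1 : ℚ_[p]) ^ a * q ^ a * (-x) ^ i / (1 + x ^ p) := by
    intro i _
    rw [hxp, hx]
    rw [pow_add, pow_add, ← pow_mul, mul_assoc i d, neg_pow x i]
    ring
  rw [Finset.sum_congr rfl hterm]
  rw [← Finset.sum_div, ← Finset.mul_sum]
  rw [div_eq_div_iff hxp1 hx1]
  linear_combination (1 + q) * (-1 : ℚ_[p]) ^ a * q ^ a * hg
end

section
/- Let p be an odd prime and let q ∈ ℚ_p satisfy ‖1 - q‖_p < 1. Then for every continuous function f : ℤ_p → ℚ_p, the sequence N ↦ ((1+q)/(1 + q^{p^N})) · Σ_{x=0}^{p^N - 1} f(x)·(-q)^x converges in ℚ_p as N → ∞ (here x runs over the natural numbers 0, 1, …, p^N − 1, regarded as elements of ℤ_p). This limit defines the fermionic p-adic q-integral I_{-q}(f) = ∫_{ℤ_p} f(x) dμ_{-q}(x). -/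
open Filter

private lemma sum_range_mul_aux {M : Type*} [AddCommMonoid M] (g : ℕ → M) (a : ℕ) :
    ∀ b, ∑ x ∈ Finset.range (a * b), g x
      = ∑ j ∈ Finset.range b, ∑ i ∈ Finset.range a, g (i + a * j)
  | 0 => by simp
  | b + 1 => by
      rw [Nat.mul_succ, Finset.sum_range_add, sum_range_mul_aux g a b,
        Finset.sum_range_succ]
      congr 1
      exact Finset.sum_congr rfl fun i _ => by rw [Nat.add_comm]

/-- Existence of the fermionic `p`-adic `q`-integral: for every continuous
`f : ℤ_p → ℚ_p` the `q`-Riemann sums converge. -/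
theorem fermionic_q_integral_exists (p : ℕ) [Fact p.Prime] (hodd : Odd p)
    (q : ℚ_[p]) (hq : ‖1 - q‖ < 1)
    (f : ℤ_[p] → ℚ_[p]) (hf : Continuous f) :
    ∃ I : ℚ_[p],
      Tendsto (fun N : ℕ =>
          ((1 + q) / (1 + q ^ p ^ N)) *
            ∑ x ∈ Finset.range (p ^ N), f (x : ℤ_[p]) * (-q) ^ x)
        atTop (nhds I) := by
  have hp : p.Prime := Fact.out
  -- ‖q‖ = 1
  have hq1 : ‖q‖ = 1 := by
    have hne : ‖(1 : ℚ_[p])‖ ≠ ‖-(1 - q)‖ := by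
      rw [norm_neg, norm_one]; exact (ne_of_lt hq).symm
    have h := Padic.add_eq_max_of_ne hne
    rw [show (1 : ℚ_[p]) + -(1 - q) = q by ring] at h
    rw [h, norm_neg, norm_one, max_eq_left hq.le]
  -- ‖q ^ m - 1‖ < 1
  have hgeom : ∀ m : ℕ, ‖q ^ m - 1‖ < 1 := by
    intro m
    have h1 : q ^ m - 1 = (∑ i ∈ Finset.range m, q ^ i) * (q - 1) := (geom_sum_mul q m).symm
    have hs : ‖∑ i ∈ Finset.range m, q ^ i‖ ≤ 1 :=
      IsUltrametricDist.norm_sum_le_of_forall_le_of_nonneg zero_le_one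
        fun i _ => by rw [norm_pow, hq1, one_pow]
    calc ‖q ^ m - 1‖ = ‖∑ i ∈ Finset.range m, q ^ i‖ * ‖q - 1‖ := by rw [h1, norm_mul]
      _ ≤ 1 * ‖q - 1‖ := by gcongr
      _ = ‖1 - q‖ := by rw [one_mul, norm_sub_rev]
      _ < 1 := hq
  -- ‖2‖ = 1 since p is odd
  have h2 : ‖(2 : ℚ_[p])‖ = 1 := by
    have hle : ‖(2 : ℚ_[p])‖ ≤ 1 := by
      simpa using Padic.norm_int_le_one (p := p) 2
    have hlt : ¬ ‖(2 : ℚ_[p])‖ < 1 := by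
      rw [show ((2 : ℚ_[p])) = (((2 : ℤ) : ℚ_[p])) by norm_cast,
        Padic.norm_intCast_lt_one_iff]
      intro h
      have h' : p ∣ 2 := by exact_mod_cast h
      have : p = 2 := (Nat.prime_dvd_prime_iff_eq hp Nat.prime_two).mp h'
      rw [this] at hodd
      exact (Nat.not_odd_iff_even.mpr (even_two)) hodd
    exact le_antisymm hle (not_lt.mp hlt)
  -- ‖1 + q ^ m‖ = 1
  have hD : ∀ m : ℕ, ‖1 + q ^ m‖ = 1 := by
    intro m
    have hne : ‖(2 : ℚ_[p])‖ ≠ ‖q ^ m - 1‖ := by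
      rw [h2]; exact (ne_of_lt (hgeom m)).symm
    rw [show (1 : ℚ_[p]) + q ^ m = 2 + (q ^ m - 1) by ring,
      Padic.add_eq_max_of_ne hne, h2, max_eq_left (hgeom m).le]
  have hDne : ∀ m : ℕ, (1 : ℚ_[p]) + q ^ m ≠ 0 := by
    intro m h
    have := hD m
    rw [h, norm_zero] at this
    exact zero_ne_one this
  have h1q : ‖1 + q‖ = 1 := by simpa using hD 1
  -- it suffices to show the sequence is Cauchy
  set u : ℕ → ℚ_[p] := fun N =>
    ((1 + q) / (1 + q ^ p ^ N)) *
      ∑ x ∈ Finset.range (p ^ N), f (x : ℤ_[p]) * (-q) ^ x with hu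
  suffices h : CauchySeq u from cauchySeq_tendsto_of_complete h
  rw [Metric.cauchySeq_iff']
  intro ε hε
  have hfu : UniformContinuous f := CompactSpace.uniformContinuous_of_continuous hf
  obtain ⟨δ, hδ, hδf⟩ := Metric.uniformContinuous_iff.mp hfu (ε / 2) (by positivity)
  obtain ⟨N, hN⟩ : ∃ N : ℕ, ‖(p : ℤ_[p])‖ ^ N < δ := by
    refine exists_pow_lt_of_lt_one hδ ?_
    rw [PadicInt.norm_p]
    exact inv_lt_one_of_one_lt₀ (by exact_mod_cast hp.one_lt)
  refine ⟨N, fun n hn => ?_⟩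
  -- notation
  set a : ℕ := p ^ N with ha
  set b : ℕ := p ^ (n - N) with hb
  have hab : p ^ n = a * b := by rw [ha, hb, ← pow_add]; congr 1; omega
  have hodda : Odd a := hodd.pow
  have hoddb : Odd b := hodd.pow
  set G : ℚ_[p] := ∑ j ∈ Finset.range b, (-(q ^ a)) ^ j with hG
  set T : ℚ_[p] := ∑ i ∈ Finset.range a, f (i : ℤ_[p]) * (-q) ^ i with hT
  set S1 : ℚ_[p] := ∑ j ∈ Finset.range b, ∑ i ∈ Finset.range a,
      f (((i + a * j : ℕ)) : ℤ_[p]) * (-q) ^ i * (-(q ^ a)) ^ j with hS1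
  set E : ℚ_[p] := ∑ j ∈ Finset.range b, ∑ i ∈ Finset.range a,
      (f (((i + a * j : ℕ)) : ℤ_[p]) - f (i : ℤ_[p])) * (-q) ^ i * (-(q ^ a)) ^ j with hE
  -- geometric sum identity
  have hgb : G * (-(q ^ a) - 1) = (-(q ^ a)) ^ b - 1 := geom_sum_mul _ b
  rw [hoddb.neg_pow, ← pow_mul] at hgb
  have hGD : (1 + q ^ a) * G = 1 + q ^ (a * b) := by linear_combination -hgb
  have hG0 : G ≠ 0 := by
    intro h
    rw [h, mul_zero] at hGD
    exact hDne (a * b) hGD.symm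
  -- decomposition of the big sum
  have hsum : ∑ x ∈ Finset.range (a * b), f (x : ℤ_[p]) * (-q) ^ x = S1 := by
    rw [sum_range_mul_aux, hS1]
    refine Finset.sum_congr rfl fun j _ => Finset.sum_congr rfl fun i _ => ?_
    rw [pow_add, pow_mul, hodda.neg_pow, mul_assoc]
  -- E = S1 - G * T
  have hEST : E = S1 - G * T := by
    rw [hE, hS1, hG, hT, Finset.sum_mul, ← Finset.sum_sub_distrib]
    refine Finset.sum_congr rfl fun j _ => ?_
    rw [Finset.mul_sum, ← Finset.sum_sub_distrib]
    exact Finset.sum_congr rfl fun i _ => by ring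
  -- the key identity
  have hC : (1 + q) / (1 + q ^ (a * b)) * G = (1 + q) / (1 + q ^ a) := by
    rw [div_mul_eq_mul_div, div_eq_div_iff (hDne _) (hDne _)]
    linear_combination (1 + q) * hGD
  have key : u n - u N = ((1 + q) / (1 + q ^ (a * b))) * E := by
    rw [hu]
    simp only []
    rw [hab, hsum, hEST, mul_sub, ← mul_assoc, hC, ha]
  -- norm estimate
  have hEnorm : ‖E‖ ≤ ε / 2 := by
    rw [hE]
    refine IsUltrametricDist.norm_sum_le_of_forall_le_of_nonneg (by positivity)
      fun j _ => ?_
    refine IsUltrametricDist.norm_sum_le_of_forall_le_of_nonneg (by positivity)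
      fun i _ => ?_
    have hfb : ‖f (((i + a * j : ℕ)) : ℤ_[p]) - f (i : ℤ_[p])‖ ≤ ε / 2 := by
      have hdist : dist (((i + a * j : ℕ) : ℤ_[p])) ((i : ℕ) : ℤ_[p]) < δ := by
        rw [dist_eq_norm]
        have hcast : (((i + a * j : ℕ) : ℤ_[p])) - ((i : ℕ) : ℤ_[p])
            = (p : ℤ_[p]) ^ N * (j : ℕ) := by push_cast [ha]; ring
        rw [hcast]
        calc ‖(p : ℤ_[p]) ^ N * (j : ℕ)‖ ≤ ‖(p : ℤ_[p]) ^ N‖ * 1 := by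
              refine (norm_mul_le _ _).trans ?_
              gcongr
              exact PadicInt.norm_le_one _
          _ = ‖(p : ℤ_[p])‖ ^ N := by rw [mul_one, norm_pow]
          _ < δ := hN
      have := hδf hdist
      rw [dist_eq_norm] at this
      exact this.le
    calc ‖(f (((i + a * j : ℕ)) : ℤ_[p]) - f (i : ℤ_[p])) * (-q) ^ i * (-(q ^ a)) ^ j‖
        = ‖f (((i + a * j : ℕ)) : ℤ_[p]) - f (i : ℤ_[p])‖ * ‖(-q) ^ i‖ * ‖(-(q ^ a)) ^ j‖ := by
          rw [norm_mul, norm_mul]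
      _ = ‖f (((i + a * j : ℕ)) : ℤ_[p]) - f (i : ℤ_[p])‖ := by
          rw [norm_pow, norm_pow, norm_neg, norm_neg, norm_pow, hq1, one_pow, one_pow,
            one_pow, mul_one, mul_one]
      _ ≤ ε / 2 := hfb
  rw [dist_eq_norm, key, norm_mul, norm_div, h1q, hD (a * b), div_one, one_mul]
  calc ‖E‖ ≤ ε / 2 := hEnorm
    _ < ε := by linarith
end

section
/- Let p be an odd prime, let m be a natural number, and let q ∈ ℚ_p with q ≠ 1 satisfy ‖1 - q‖_p < p^{-1/(p-1)}. Then the sequence N ↦ ((1+q)/(1 + q^{p^N})) · Σ_{a=0}^{p^N - 1} [a]_q^m · (-1)^a · q^a converges in ℚ_p to (1+q) · (1/(1-q))^m · Σ_{k=0}^{m} (m choose k) · (-1)^k / (1 + q^{k+1}). In other words, the q-Euler number E_{m,q} = ∫_{ℤ_p} [x]_q^m dμ_{-q}(x) equals [2]_q (1/(1-q))^m Σ_{k=0}^m (m choose k)(-1)^k/(1+q^{k+1}). -/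
open Filter

section Aux

variable {p : ℕ} [Fact p.Prime]

private lemma aux_norm_le_inv_p {q : ℚ_[p]}
    (hq : ‖1 - q‖ < (p : ℝ) ^ (-(1 : ℝ) / ((p : ℝ) - 1))) :
    ‖1 - q‖ ≤ (p : ℝ)⁻¹ := by
  have hp1 : (1 : ℝ) < (p : ℝ) := by
    exact_mod_cast (Fact.out : p.Prime).one_lt
  have hp0 : (0 : ℝ) < (p : ℝ) := lt_trans one_pos hp1
  rcases eq_or_ne (1 - q) 0 with h | h
  · rw [h, norm_zero]; positivity
  · rw [Padic.norm_eq_zpow_neg_valuation h] at hq ⊢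
    set v : ℤ := (1 - q).valuation with hv
    have hlt : ((-v : ℤ) : ℝ) < -(1 : ℝ) / ((p : ℝ) - 1) := by
      have := hq
      rw [show ((p : ℝ) ^ (-v) : ℝ) = (p : ℝ) ^ ((-v : ℤ) : ℝ) by
        rw [Real.rpow_intCast]] at this
      exact (Real.rpow_lt_rpow_left_iff hp1).mp this
    have hfrac : -(1 : ℝ) / ((p : ℝ) - 1) < 0 := by
      apply div_neg_of_neg_of_pos <;> linarith
    have hvpos : (0 : ℝ) < (v : ℝ) := by push_cast at hlt ⊢; linarith
    have hv1 : (1 : ℤ) ≤ v := by exact_mod_cast hvpos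
    calc (p : ℝ) ^ (-v) ≤ (p : ℝ) ^ (-1 : ℤ) := by
          apply zpow_le_zpow_right₀ (le_of_lt hp1); omega
      _ = (p : ℝ)⁻¹ := by simp

private lemma aux_pow_sub_one_norm {x : ℚ_[p]} (hx : ‖x - 1‖ ≤ 1) (n : ℕ) :
    ‖x ^ n - 1‖ ≤ ‖x - 1‖ := by
  have hxn : ‖x‖ ≤ 1 := by
    calc ‖x‖ = ‖(x - 1) + 1‖ := by ring_nf
      _ ≤ max ‖x - 1‖ ‖(1 : ℚ_[p])‖ := IsUltrametricDist.norm_add_le_max _ _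
      _ ≤ 1 := by rw [norm_one]; exact max_le hx le_rfl
  have hgeom : x ^ n - 1 = (∑ i ∈ Finset.range n, x ^ i) * (x - 1) := (geom_sum_mul x n).symm
  rw [hgeom, norm_mul]
  have hsum : ‖∑ i ∈ Finset.range n, x ^ i‖ ≤ 1 := by
    apply IsUltrametricDist.norm_sum_le_of_forall_le_of_nonneg zero_le_one
    intro i _
    rw [norm_pow]
    exact pow_le_one₀ (norm_nonneg x) hxn
  calc ‖∑ i ∈ Finset.range n, x ^ i‖ * ‖x - 1‖ ≤ 1 * ‖x - 1‖ :=
        mul_le_mul_of_nonneg_right hsum (norm_nonneg _)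
    _ = ‖x - 1‖ := one_mul _

private lemma aux_pow_p_norm {x : ℚ_[p]} (hx : ‖x - 1‖ ≤ (p : ℝ)⁻¹) :
    ‖x ^ p - 1‖ ≤ (p : ℝ)⁻¹ * ‖x - 1‖ := by
  have hp := (Fact.out : p.Prime)
  have hp1 : (1 : ℝ) < (p : ℝ) := by exact_mod_cast hp.one_lt
  have hpinv1 : (p : ℝ)⁻¹ ≤ 1 := by
    rw [inv_le_one_iff₀]; right; linarith
  have hpinv0 : (0 : ℝ) ≤ (p : ℝ)⁻¹ := by positivity
  set t := x - 1 with ht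
  have ht1 : ‖t‖ ≤ 1 := le_trans hx hpinv1
  have hxp : x ^ p - 1 = ∑ i ∈ Finset.range p, t ^ (i + 1) * (p.choose (i + 1) : ℚ_[p]) := by
    have hbin : x ^ p = ∑ k ∈ Finset.range (p + 1), t ^ k * 1 ^ (p - k) * (p.choose k : ℚ_[p]) := by
      rw [show x = t + 1 by rw [ht]; ring]
      exact add_pow t 1 p
    rw [hbin, Finset.sum_range_succ']
    simp [one_pow]
  rw [hxp]
  apply IsUltrametricDist.norm_sum_le_of_forall_le_of_nonneg (by positivity)
  intro i hi
  rw [Finset.mem_range] at hi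
  rw [norm_mul, norm_pow]
  rcases eq_or_lt_of_le (Nat.succ_le_of_lt hi) with heq | hlt
  · -- i + 1 = p : term is ‖t‖^p * ‖1‖
    have hi1 : 1 ≤ i := by have := hp.two_le; omega
    have hc1 : p.choose (i + 1) = 1 := by rw [show i + 1 = p from heq]; exact Nat.choose_self p
    rw [hc1, Nat.cast_one, norm_one, mul_one]
    calc ‖t‖ ^ (i + 1) = ‖t‖ ^ i * ‖t‖ := pow_succ _ _
      _ ≤ (p : ℝ)⁻¹ * ‖t‖ := mul_le_mul_of_nonneg_right
          (le_trans (by simpa using pow_le_pow_of_le_one (norm_nonneg t) ht1 hi1) hx)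
          (norm_nonneg t)
  · -- i + 1 < p : p divides choose
    have hdvd : (p : ℤ) ∣ (p.choose (i + 1) : ℤ) := by
      exact_mod_cast hp.dvd_choose_self (Nat.succ_ne_zero i) hlt
    have hnc : ‖((p.choose (i + 1) : ℤ) : ℚ_[p])‖ ≤ (p : ℝ)⁻¹ := by
      have := (Padic.norm_int_le_pow_iff_dvd (p.choose (i + 1) : ℤ) 1).mpr
        (by simpa using hdvd)
      simpa using this
    have htpow : ‖t‖ ^ (i + 1) ≤ ‖t‖ := by
      calc ‖t‖ ^ (i + 1) ≤ ‖t‖ ^ 1 := pow_le_pow_of_le_one (norm_nonneg t) ht1 (by omega)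
        _ = ‖t‖ := pow_one _
    calc ‖t‖ ^ (i + 1) * ‖((p.choose (i + 1) : ℕ) : ℚ_[p])‖
        ≤ ‖t‖ * (p : ℝ)⁻¹ := by
          apply mul_le_mul htpow _ (norm_nonneg _) (norm_nonneg t)
          exact_mod_cast hnc
      _ = (p : ℝ)⁻¹ * ‖t‖ := mul_comm _ _

end Aux

section Aux2

variable {p : ℕ} [Fact p.Prime]

private lemma aux_tendsto_pow_p {q : ℚ_[p]} (hq : ‖q - 1‖ ≤ (p : ℝ)⁻¹) :
    Tendsto (fun N : ℕ => q ^ p ^ N) atTop (nhds 1) := by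
  have hp := (Fact.out : p.Prime)
  have hp1 : (1 : ℝ) < (p : ℝ) := by exact_mod_cast hp.one_lt
  have hpinv1 : (p : ℝ)⁻¹ < 1 := by
    rw [inv_lt_one_iff₀]; right; exact hp1
  have hpinv0 : (0 : ℝ) ≤ (p : ℝ)⁻¹ := by positivity
  have key : ∀ N : ℕ, ‖q ^ p ^ N - 1‖ ≤ ((p : ℝ)⁻¹) ^ N * ‖q - 1‖ := by
    intro N
    induction N with
    | zero => simp
    | succ N ih =>
      have hle : ‖q ^ p ^ N - 1‖ ≤ (p : ℝ)⁻¹ := by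
        refine le_trans ih (le_trans ?_ hq)
        calc ((p : ℝ)⁻¹) ^ N * ‖q - 1‖ ≤ 1 * ‖q - 1‖ :=
              mul_le_mul_of_nonneg_right (pow_le_one₀ hpinv0 (le_of_lt hpinv1)) (norm_nonneg _)
          _ = ‖q - 1‖ := one_mul _
      have hstep := aux_pow_p_norm hle
      have heq : q ^ p ^ (N + 1) = (q ^ p ^ N) ^ p := by
        rw [← pow_mul, pow_succ]
      rw [heq]
      calc ‖(q ^ p ^ N) ^ p - 1‖ ≤ (p : ℝ)⁻¹ * ‖q ^ p ^ N - 1‖ := hstep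
        _ ≤ (p : ℝ)⁻¹ * (((p : ℝ)⁻¹) ^ N * ‖q - 1‖) := by
            exact mul_le_mul_of_nonneg_left ih hpinv0
        _ = ((p : ℝ)⁻¹) ^ (N + 1) * ‖q - 1‖ := by ring
  rw [tendsto_iff_norm_sub_tendsto_zero]
  apply squeeze_zero (fun N => norm_nonneg _) key
  have : Tendsto (fun N : ℕ => ((p : ℝ)⁻¹) ^ N) atTop (nhds 0) :=
    tendsto_pow_atTop_nhds_zero_of_lt_one hpinv0 hpinv1
  simpa using this.mul_const ‖q - 1‖

private lemma aux_ne_neg_one {q : ℚ_[p]} (hodd : Odd p) (hq : ‖q - 1‖ ≤ (p : ℝ)⁻¹)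
    (n : ℕ) : q ^ (n + 1) ≠ -1 := by
  have hp := (Fact.out : p.Prime)
  have hp1 : (1 : ℝ) < (p : ℝ) := by exact_mod_cast hp.one_lt
  intro h
  have h1 : ‖q - 1‖ ≤ 1 := le_trans hq (by rw [inv_le_one_iff₀]; right; linarith)
  have h2 : ‖q ^ (n + 1) - 1‖ ≤ ‖q - 1‖ := aux_pow_sub_one_norm h1 (n + 1)
  rw [h] at h2
  have h3 : ‖(-1 : ℚ_[p]) - 1‖ = ‖((2 : ℤ) : ℚ_[p])‖ := by
    rw [show ((-1 : ℚ_[p]) - 1) = -((2 : ℤ) : ℚ_[p]) by push_cast; ring, norm_neg]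
  have h4 : ‖((2 : ℤ) : ℚ_[p])‖ = 1 := by
    rcases lt_or_eq_of_le (Padic.norm_int_le_one (2 : ℤ) : ‖((2:ℤ) : ℚ_[p])‖ ≤ 1) with hlt | he
    · exfalso
      have := (Padic.norm_intCast_lt_one_iff (k := 2)).mp hlt
      have hpd : p ∣ 2 := by exact_mod_cast this
      have hp2 : p = 2 := (Nat.prime_dvd_prime_iff_eq hp Nat.prime_two).mp hpd
      exact (by decide : ¬ Odd 2) (hp2 ▸ hodd)
    · exact he
  rw [h3, h4] at h2
  have : ‖q - 1‖ < 1 := lt_of_le_of_lt hq (by rw [inv_lt_one_iff₀]; right; linarith)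
  linarith

end Aux2

private lemma aux_sum_identity {p : ℕ} [Fact p.Prime] (m : ℕ) (q : ℚ_[p]) (P : ℕ) (hP : Odd P)
    (hne : ∀ k : ℕ, q ^ (k + 1) ≠ -1) :
    ∑ a ∈ Finset.range P, ((1 - q ^ a) / (1 - q)) ^ m * (-1 : ℚ_[p]) ^ a * q ^ a
      = (1 / (1 - q)) ^ m * ∑ k ∈ Finset.range (m + 1),
          (m.choose k : ℚ_[p]) * (-1 : ℚ_[p]) ^ k * (1 + (q ^ P) ^ (k + 1)) / (1 + q ^ (k + 1)) := by
  have hterm : ∀ a ∈ Finset.range P,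
      ((1 - q ^ a) / (1 - q)) ^ m * (-1 : ℚ_[p]) ^ a * q ^ a
        = (1 / (1 - q)) ^ m * ∑ k ∈ Finset.range (m + 1),
            ((m.choose k : ℚ_[p]) * (-1 : ℚ_[p]) ^ k) * (-(q ^ (k + 1))) ^ a := by
    intro a _
    have hbin : (1 - q ^ a) ^ m
        = ∑ k ∈ Finset.range (m + 1), (-(q ^ a)) ^ k * 1 ^ (m - k) * (m.choose k : ℚ_[p]) := by
      rw [show (1 - q ^ a) = (-(q ^ a)) + 1 by ring]
      exact add_pow _ _ _
    have hstep1 : ((1 - q ^ a) / (1 - q)) ^ m * (-1 : ℚ_[p]) ^ a * q ^ a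
        = (1 / (1 - q)) ^ m * ((1 - q ^ a) ^ m * ((-1 : ℚ_[p]) ^ a * q ^ a)) := by
      rw [div_pow, div_pow, one_pow]
      ring
    rw [hstep1, hbin, Finset.sum_mul]
    congr 1
    apply Finset.sum_congr rfl
    intro k _
    rw [one_pow, mul_one, neg_pow (q ^ a) k, neg_pow (q ^ (k + 1)) a,
      ← pow_mul q a k, ← pow_mul q (k + 1) a,
      show (k + 1) * a = a * k + a by ring, pow_add]
    ring
  rw [Finset.sum_congr rfl hterm, ← Finset.mul_sum, Finset.sum_comm]
  congr 1
  apply Finset.sum_congr rfl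
  intro k _
  rw [← Finset.mul_sum]
  have hy : (-(q ^ (k + 1)) : ℚ_[p]) ≠ 1 := by
    intro h
    apply hne k
    rw [← neg_eq_iff_eq_neg]
    exact h.symm ▸ rfl
  rw [geom_sum_eq hy P]
  have hyP : (-(q ^ (k + 1)) : ℚ_[p]) ^ P = -((q ^ P) ^ (k + 1)) := by
    rw [hP.neg_pow, pow_right_comm]
  rw [hyP, show (-((q ^ P) ^ (k + 1)) - 1 : ℚ_[p]) = -((q ^ P) ^ (k + 1) + 1) by ring,
    show (-(q ^ (k + 1)) - 1 : ℚ_[p]) = -(q ^ (k + 1) + 1) by ring, neg_div_neg_eq,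
    add_comm ((q ^ P) ^ (k + 1)) 1, add_comm (q ^ (k + 1)) 1, mul_div_assoc]

/-- Theorem 1: closed form of the `q`-Euler number `E_{m,q}` for
`‖1 - q‖ < p^{-1/(p-1)}`. -/
theorem q_euler_number_closed_form (p : ℕ) [Fact p.Prime] (hodd : Odd p)
    (m : ℕ) (q : ℚ_[p]) (hq1 : q ≠ 1)
    (hq : ‖1 - q‖ < (p : ℝ) ^ (-(1 : ℝ) / ((p : ℝ) - 1))) :
    Tendsto (fun N : ℕ =>
        ((1 + q) / (1 + q ^ p ^ N)) *
          ∑ a ∈ Finset.range (p ^ N),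
            ((1 - q ^ a) / (1 - q)) ^ m * (-1 : ℚ_[p]) ^ a * q ^ a)
      atTop
      (nhds ((1 + q) * (1 / (1 - q)) ^ m *
        ∑ k ∈ Finset.range (m + 1),
          (m.choose k : ℚ_[p]) * (-1 : ℚ_[p]) ^ k / (1 + q ^ (k + 1)))) := by
  have hq' : ‖q - 1‖ ≤ (p : ℝ)⁻¹ := by
    rw [norm_sub_rev]
    exact aux_norm_le_inv_p hq
  have hne : ∀ k : ℕ, q ^ (k + 1) ≠ -1 := fun k => aux_ne_neg_one hodd hq' k
  have htend : Tendsto (fun N : ℕ => q ^ p ^ N) atTop (nhds 1) := aux_tendsto_pow_p hq'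
  set F : ℚ_[p] → ℚ_[p] := fun x =>
    ((1 + q) / (1 + x)) * ((1 / (1 - q)) ^ m *
      ∑ k ∈ Finset.range (m + 1),
        (m.choose k : ℚ_[p]) * (-1 : ℚ_[p]) ^ k * (1 + x ^ (k + 1)) / (1 + q ^ (k + 1)))
    with hF
  have hfun : (fun N : ℕ =>
      ((1 + q) / (1 + q ^ p ^ N)) *
        ∑ a ∈ Finset.range (p ^ N),
          ((1 - q ^ a) / (1 - q)) ^ m * (-1 : ℚ_[p]) ^ a * q ^ a)
      = fun N : ℕ => F (q ^ p ^ N) := by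
    funext N
    rw [aux_sum_identity m q (p ^ N) (hodd.pow) hne, hF]
  have hcont : ContinuousAt F 1 := by
    apply ContinuousAt.mul
    · apply ContinuousAt.div continuousAt_const
      · exact (continuous_const.add (continuous_id (X := ℚ_[p]))).continuousAt
      · norm_num
    · apply ContinuousAt.mul continuousAt_const
      apply Continuous.continuousAt
      apply continuous_finset_sum
      intro k _
      exact (continuous_const.mul (continuous_const.add (continuous_pow (k + 1)))).div_const _
  have hlim : Tendsto (fun N : ℕ => F (q ^ p ^ N)) atTop (nhds (F 1)) :=
    hcont.tendsto.comp htend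
  have hF1 : F 1 = (1 + q) * (1 / (1 - q)) ^ m *
      ∑ k ∈ Finset.range (m + 1),
        (m.choose k : ℚ_[p]) * (-1 : ℚ_[p]) ^ k / (1 + q ^ (k + 1)) := by
    rw [hF]
    simp only [one_pow]
    have hs : ∑ k ∈ Finset.range (m + 1),
        (m.choose k : ℚ_[p]) * (-1 : ℚ_[p]) ^ k * (1 + 1) / (1 + q ^ (k + 1))
        = 2 * ∑ k ∈ Finset.range (m + 1),
            (m.choose k : ℚ_[p]) * (-1 : ℚ_[p]) ^ k / (1 + q ^ (k + 1)) := by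
      rw [Finset.mul_sum]
      apply Finset.sum_congr rfl
      intro k _
      rw [div_eq_mul_inv, div_eq_mul_inv]
      ring
    rw [hs]
    have h2 : (1 : ℚ_[p]) + 1 = 2 := by norm_num
    rw [h2]
    field_simp
  rw [hfun, ← hF1]
  exact hlim
end

section
/- Let p be an odd prime, let m be a natural number, and let q ∈ ℚ_p with q ≠ 1 satisfy ‖1 - q‖_p < 1. Then the sequence N ↦ ((1+q)/(1 + q^{p^N})) · Σ_{a=0}^{p^N - 1} [a]_q^m · (-1)^a · q^a converges in ℚ_p to (1+q) · (1/(1-q))^m · Σ_{k=0}^{m} (m choose k) · (-1)^k / (1 + q^{k+1}). -/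
open Filter

section auxlemmas

variable {p : ℕ} [hp : Fact p.Prime]

private lemma aux_norm_one {x : ℚ_[p]} (hx : ‖1 - x‖ < 1) : ‖x‖ = 1 := by
  have hx' : x = 1 + -(1 - x) := by ring
  rw [hx', Padic.add_eq_max_of_ne, norm_one, norm_neg, max_eq_left hx.le]
  rw [norm_one, norm_neg]
  exact (ne_of_lt hx).symm

private lemma aux_pow_sub_one {x : ℚ_[p]} (hx : ‖x‖ ≤ 1) (n : ℕ) :
    ‖x ^ n - 1‖ ≤ ‖x - 1‖ := by
  rw [← geom_sum_mul, norm_mul]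
  have h1 : ‖∑ i ∈ Finset.range n, x ^ i‖ ≤ 1 := by
    apply IsUltrametricDist.norm_sum_le_of_forall_le_of_nonneg zero_le_one
    intro i _
    rw [norm_pow]
    exact pow_le_one₀ (norm_nonneg x) hx
  calc ‖∑ i ∈ Finset.range n, x ^ i‖ * ‖x - 1‖ ≤ 1 * ‖x - 1‖ := by
        exact mul_le_mul_of_nonneg_right h1 (norm_nonneg _)
    _ = ‖x - 1‖ := one_mul _

private lemma aux_step {x : ℚ_[p]} (hx : ‖x - 1‖ < 1) :
    ‖x ^ p - 1‖ ≤ max ‖x - 1‖ ((p : ℝ))⁻¹ * ‖x - 1‖ := by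
  have hx1 : ‖x‖ ≤ 1 := le_of_eq (aux_norm_one (by rwa [norm_sub_rev] at hx))
  rw [← geom_sum_mul, norm_mul]
  apply mul_le_mul_of_nonneg_right _ (norm_nonneg _)
  have hsplit : (∑ i ∈ Finset.range p, x ^ i)
      = (∑ i ∈ Finset.range p, (x ^ i - 1)) + (p : ℚ_[p]) := by
    rw [Finset.sum_sub_distrib]
    simp
  rw [hsplit]
  refine le_trans (Padic.nonarchimedean _ _) (max_le_max ?_ ?_)
  · apply IsUltrametricDist.norm_sum_le_of_forall_le_of_nonneg (norm_nonneg _)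
    intro i _
    exact aux_pow_sub_one hx1 i
  · exact le_of_eq (Padic.norm_p)

private lemma aux_iter (q : ℚ_[p]) (hq : ‖1 - q‖ < 1) (n : ℕ) :
    ‖q ^ p ^ n - 1‖ ≤ (max ‖1 - q‖ ((p : ℝ))⁻¹) ^ n * ‖1 - q‖ := by
  have hp1 : (1 : ℝ) < p := by exact_mod_cast hp.out.one_lt
  have hc0 : 0 ≤ max ‖1 - q‖ ((p : ℝ))⁻¹ := le_max_of_le_right (by positivity)
  have hc1 : max ‖1 - q‖ ((p : ℝ))⁻¹ < 1 :=
    max_lt hq (inv_lt_one_of_one_lt₀ hp1)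
  induction n with
  | zero => simp [norm_sub_rev]
  | succ n ih =>
    set c := max ‖1 - q‖ ((p : ℝ))⁻¹ with hc
    have hle : ‖q ^ p ^ n - 1‖ ≤ ‖1 - q‖ := by
      refine ih.trans ?_
      calc c ^ n * ‖1 - q‖ ≤ 1 * ‖1 - q‖ := by
            exact mul_le_mul_of_nonneg_right (pow_le_one₀ hc0 hc1.le) (norm_nonneg _)
        _ = ‖1 - q‖ := one_mul _
    have hlt : ‖q ^ p ^ n - 1‖ < 1 := lt_of_le_of_lt hle hq
    have hstep := aux_step (x := q ^ p ^ n) hlt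
    have hrw : q ^ p ^ (n + 1) = (q ^ p ^ n) ^ p := by
      rw [← pow_mul, ← pow_succ]
    rw [hrw]
    refine hstep.trans ?_
    have hmax : max ‖q ^ p ^ n - 1‖ ((p : ℝ))⁻¹ ≤ c :=
      max_le (hle.trans (le_max_left _ _)) (le_max_right _ _)
    calc max ‖q ^ p ^ n - 1‖ ((p : ℝ))⁻¹ * ‖q ^ p ^ n - 1‖
        ≤ c * (c ^ n * ‖1 - q‖) := by
          apply mul_le_mul hmax ih (norm_nonneg _) hc0
      _ = c ^ (n + 1) * ‖1 - q‖ := by ring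

private lemma aux_tendsto (q : ℚ_[p]) (hq : ‖1 - q‖ < 1) :
    Tendsto (fun N : ℕ => q ^ p ^ N) atTop (nhds 1) := by
  have hp1 : (1 : ℝ) < p := by exact_mod_cast hp.out.one_lt
  have hc0 : 0 ≤ max ‖1 - q‖ ((p : ℝ))⁻¹ := le_max_of_le_right (by positivity)
  have hc1 : max ‖1 - q‖ ((p : ℝ))⁻¹ < 1 :=
    max_lt hq (inv_lt_one_of_one_lt₀ hp1)
  rw [← tendsto_sub_nhds_zero_iff]
  apply squeeze_zero_norm (fun n => aux_iter q hq n)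
  have := (tendsto_pow_atTop_nhds_zero_of_lt_one hc0 hc1).mul_const ‖1 - q‖
  simpa using this

/-- The key finite algebraic identity. -/
private lemma aux_sum_ident (q : ℚ_[p]) (hk : ∀ k : ℕ, (1 : ℚ_[p]) + q ^ (k + 1) ≠ 0)
    (m n : ℕ) (hn : Odd n) :
    ∑ a ∈ Finset.range n, (1 - q ^ a) ^ m * (-1 : ℚ_[p]) ^ a * q ^ a
      = ∑ k ∈ Finset.range (m + 1),
          (m.choose k : ℚ_[p]) * (-1) ^ k * (1 + (q ^ n) ^ (k + 1)) / (1 + q ^ (k + 1)) := by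
  have step1 : ∀ a : ℕ, (1 - q ^ a) ^ m * (-1 : ℚ_[p]) ^ a * q ^ a
      = ∑ k ∈ Finset.range (m + 1),
          (m.choose k : ℚ_[p]) * (-1) ^ k * (-(q ^ (k + 1))) ^ a := by
    intro a
    have hbin : (1 - q ^ a) ^ m = ∑ k ∈ Finset.range (m + 1),
        (-(q ^ a)) ^ k * 1 ^ (m - k) * (m.choose k : ℚ_[p]) := by
      rw [sub_eq_add_neg, add_comm]
      exact add_pow _ _ _
    rw [hbin, Finset.sum_mul, Finset.sum_mul]
    apply Finset.sum_congr rfl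
    intro k _
    have h1 : (-(q ^ (k + 1))) ^ a = (-1 : ℚ_[p]) ^ a * (q ^ (k + 1)) ^ a := by
      rw [neg_pow]
    rw [h1, neg_pow]
    ring
  rw [Finset.sum_congr rfl (fun a _ => step1 a), Finset.sum_comm]
  apply Finset.sum_congr rfl
  intro k _
  have hne : (-(q ^ (k + 1)) : ℚ_[p]) ≠ 1 := by
    intro h
    apply hk k
    rw [← h]; ring
  rw [← Finset.mul_sum, geom_sum_eq hne]
  have hnum : (-(q ^ (k + 1))) ^ n = -((q ^ n) ^ (k + 1)) := by
    rw [hn.neg_pow, ← pow_mul, ← pow_mul, mul_comm]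
  rw [hnum]
  rw [show (-((q ^ n) ^ (k + 1)) - 1) = -(1 + (q ^ n) ^ (k + 1)) by ring,
      show (-(q ^ (k + 1)) - 1) = -(1 + q ^ (k + 1)) by ring, neg_div_neg_eq]
  rw [mul_div_assoc]

end auxlemmas

/-- Corollary 3: closed form of the `q`-Euler number `E_{m,q}` for `‖1 - q‖ < 1`. -/
theorem q_euler_number_closed_form' (p : ℕ) [Fact p.Prime] (hodd : Odd p)
    (m : ℕ) (q : ℚ_[p]) (hq1 : q ≠ 1) (hq : ‖1 - q‖ < 1) :
    Tendsto (fun N : ℕ =>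
        ((1 + q) / (1 + q ^ p ^ N)) *
          ∑ a ∈ Finset.range (p ^ N),
            ((1 - q ^ a) / (1 - q)) ^ m * (-1 : ℚ_[p]) ^ a * q ^ a)
      atTop
      (nhds ((1 + q) * (1 / (1 - q)) ^ m *
        ∑ k ∈ Finset.range (m + 1),
          (m.choose k : ℚ_[p]) * (-1 : ℚ_[p]) ^ k / (1 + q ^ (k + 1)))) := by
  have hq' : ‖q‖ = 1 := aux_norm_one hq
  -- denominators are nonzero
  have hone : ∀ x : ℚ_[p], ‖1 - x‖ < 1 → ‖1 + x‖ = 1 := by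
    intro x hx
    have h2 : ‖(2 : ℚ_[p])‖ = 1 := by
      have hle : ‖(2 : ℚ_[p])‖ ≤ 1 := by
        simpa using Padic.norm_int_le_one (p := p) 2
      rcases lt_or_eq_of_le hle with h | h
      · exfalso
        have := (Padic.norm_intCast_lt_one_iff (p := p) (k := 2)).mp (by simpa using h)
        have hple : (p : ℤ) ≤ 2 := Int.le_of_dvd (by norm_num) this
        have h2le : 2 ≤ p := (Fact.out : p.Prime).two_le
        have hne2 : p ≠ 2 := by
          rintro rfl
          exact (by norm_num : ¬ Odd 2) hodd
        have : p ≤ 2 := by exact_mod_cast hple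
        omega
      · exact h
    have hx' : (1 : ℚ_[p]) + x = 2 + -(1 - x) := by ring
    rw [hx', Padic.add_eq_max_of_ne, h2, norm_neg, max_eq_left (by rw [h2] at *; exact hx.le)]
    rw [h2, norm_neg]
    exact (ne_of_lt hx).symm
  have hqk : ∀ k : ℕ, ‖1 - q ^ (k + 1)‖ < 1 := by
    intro k
    rw [norm_sub_rev]
    exact lt_of_le_of_lt (aux_pow_sub_one (le_of_eq hq') (k + 1)) (by rwa [norm_sub_rev])
  have hk : ∀ k : ℕ, (1 : ℚ_[p]) + q ^ (k + 1) ≠ 0 := by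
    intro k h
    have := hone _ (hqk k)
    rw [h, norm_zero] at this
    exact one_ne_zero this.symm
  have hpodd : ∀ N : ℕ, Odd (p ^ N) := fun N => hodd.pow
  -- pointwise rewrite of the sequence
  have hfun : ∀ N : ℕ,
      ((1 + q) / (1 + q ^ p ^ N)) *
          ∑ a ∈ Finset.range (p ^ N),
            ((1 - q ^ a) / (1 - q)) ^ m * (-1 : ℚ_[p]) ^ a * q ^ a
      = ((1 + q) / (1 + q ^ p ^ N)) * ((1 / (1 - q)) ^ m *
          ∑ k ∈ Finset.range (m + 1),
            (m.choose k : ℚ_[p]) * (-1) ^ k * (1 + (q ^ p ^ N) ^ (k + 1)) / (1 + q ^ (k + 1))) := by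
    intro N
    congr 1
    rw [← aux_sum_ident q hk m (p ^ N) (hpodd N), Finset.mul_sum]
    apply Finset.sum_congr rfl
    intro a _
    rw [div_pow, one_div, inv_pow]
    ring
  simp only [hfun]
  -- now take limits
  have hy := aux_tendsto q hq
  have hden : Tendsto (fun N : ℕ => 1 + q ^ p ^ N) atTop (nhds (2 : ℚ_[p])) := by
    have := (tendsto_const_nhds (x := (1 : ℚ_[p])) (f := atTop)).add hy
    norm_num at this
    exact this
  have h2ne : (2 : ℚ_[p]) ≠ 0 := two_ne_zero
  have hfrac : Tendsto (fun N : ℕ => (1 + q) / (1 + q ^ p ^ N)) atTop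
      (nhds ((1 + q) / 2)) := tendsto_const_nhds.div hden h2ne
  have hsum : Tendsto (fun N : ℕ => (1 / (1 - q)) ^ m *
      ∑ k ∈ Finset.range (m + 1),
        (m.choose k : ℚ_[p]) * (-1) ^ k * (1 + (q ^ p ^ N) ^ (k + 1)) / (1 + q ^ (k + 1)))
      atTop (nhds ((1 / (1 - q)) ^ m *
      ∑ k ∈ Finset.range (m + 1),
        (m.choose k : ℚ_[p]) * (-1) ^ k * 2 / (1 + q ^ (k + 1)))) := by
    apply Tendsto.const_mul
    apply tendsto_finset_sum
    intro k _
    apply Tendsto.div_const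
    apply Tendsto.const_mul
    have h1 : Tendsto (fun N : ℕ => (q ^ p ^ N) ^ (k + 1)) atTop (nhds 1) := by
      have := hy.pow (k + 1)
      simpa using this
    have := (tendsto_const_nhds (x := (1 : ℚ_[p])) (f := atTop)).add h1
    norm_num at this
    exact this
  have := hfrac.mul hsum
  convert this using 2
  rw [show (∑ k ∈ Finset.range (m + 1),
        (m.choose k : ℚ_[p]) * (-1) ^ k * 2 / (1 + q ^ (k + 1)))
      = 2 * ∑ k ∈ Finset.range (m + 1),
        (m.choose k : ℚ_[p]) * (-1) ^ k / (1 + q ^ (k + 1)) by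
    rw [Finset.mul_sum]
    exact Finset.sum_congr rfl fun k _ => by ring]
  field_simp
end

section
/- Let p be an odd prime and let q ∈ ℚ_p satisfy ‖1 - q‖_p < 1. Then for every continuous function f : ℤ_p → ℚ_p, the sequence N ↦ ((1+q)/(1 + q^{p^N})) · ( q · Σ_{x=0}^{p^N - 1} f(x+1)·(-q)^x + Σ_{x=0}^{p^N - 1} f(x)·(-q)^x ) converges to (1+q)·f(0) in ℚ_p. Equivalently, q·I_{-q}(f_1) + I_{-q}(f) = [2]_q · f(0), where f_1(x) = f(x+1). -/
open Filter

private lemma fqi_norm_pow_p_sub_one {p : ℕ} [Fact p.Prime] {x : ℚ_[p]} (hx : ‖x - 1‖ < 1) :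
    ‖x ^ p - 1‖ ≤ ‖x - 1‖ * max ‖(p : ℚ_[p])‖ ‖x - 1‖ := by
  have hx1 : ‖x‖ ≤ 1 := by
    calc ‖x‖ = ‖(x - 1) + 1‖ := by ring_nf
    _ ≤ max ‖x - 1‖ ‖(1 : ℚ_[p])‖ := Padic.nonarchimedean _ _
    _ ≤ 1 := by simp [max_le_iff]; linarith
  have hgeom : x ^ p - 1 = (∑ i ∈ Finset.range p, x ^ i) * (x - 1) := (geom_sum_mul x p).symm
  have hbd : ‖∑ i ∈ Finset.range p, x ^ i‖ ≤ max ‖(p : ℚ_[p])‖ ‖x - 1‖ := by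
    have hsplit : (∑ i ∈ Finset.range p, x ^ i)
        = (∑ i ∈ Finset.range p, (x ^ i - 1)) + (p : ℚ_[p]) := by
      rw [Finset.sum_sub_distrib]
      simp
    rw [hsplit]
    refine (Padic.nonarchimedean _ _).trans (max_le (le_max_of_le_right ?_) (le_max_left _ _))
    refine IsUltrametricDist.norm_sum_le_of_forall_le_of_nonneg (norm_nonneg _) fun i _ => ?_
    have hgi : x ^ i - 1 = (∑ j ∈ Finset.range i, x ^ j) * (x - 1) := (geom_sum_mul x i).symm
    rw [hgi, norm_mul]
    have h1 : ‖∑ j ∈ Finset.range i, x ^ j‖ ≤ 1 :=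
      IsUltrametricDist.norm_sum_le_of_forall_le_of_nonneg zero_le_one fun j _ =>
        by rw [norm_pow]; exact pow_le_one₀ (norm_nonneg _) hx1
    calc ‖∑ j ∈ Finset.range i, x ^ j‖ * ‖x - 1‖ ≤ 1 * ‖x - 1‖ :=
          mul_le_mul_of_nonneg_right h1 (norm_nonneg _)
    _ = ‖x - 1‖ := one_mul _
  rw [hgeom, norm_mul, mul_comm]
  exact mul_le_mul_of_nonneg_left hbd (norm_nonneg _)

private lemma fqi_tendsto_pow_p_pow {p : ℕ} [Fact p.Prime] {q : ℚ_[p]} (hq : ‖q - 1‖ < 1) :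
    Tendsto (fun N : ℕ => q ^ p ^ N) atTop (nhds 1) := by
  set c : ℝ := max ‖(p : ℚ_[p])‖ ‖q - 1‖ with hc
  have hc0 : 0 ≤ c := le_max_of_le_right (norm_nonneg _)
  have hpnorm : ‖(p : ℚ_[p])‖ < 1 := by
    rw [Padic.norm_p]
    have h1 : (1 : ℝ) < p := by exact_mod_cast (Fact.out : p.Prime).one_lt
    exact inv_lt_one_of_one_lt₀ h1
  have hc1 : c < 1 := max_lt hpnorm hq
  have key : ∀ N : ℕ, ‖q ^ p ^ N - 1‖ ≤ ‖q - 1‖ * c ^ N := by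
    intro N
    induction N with
    | zero => simp
    | succ N ih =>
      have hlt : ‖q ^ p ^ N - 1‖ < 1 := by
        have hpow : c ^ N ≤ 1 := pow_le_one₀ hc0 hc1.le
        have hpow0 : 0 ≤ c ^ N := pow_nonneg hc0 N
        have hqc : ‖q - 1‖ ≥ 0 := norm_nonneg _
        nlinarith [ih]
      have := fqi_norm_pow_p_sub_one hlt
      have heq : (q ^ p ^ N) ^ p = q ^ p ^ (N + 1) := by
        rw [← pow_mul, pow_succ]
      rw [heq] at this
      refine this.trans ?_
      have hmax : max ‖(p : ℚ_[p])‖ ‖q ^ p ^ N - 1‖ ≤ c := by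
        refine max_le (le_max_left _ _) (ih.trans ?_)
        calc ‖q - 1‖ * c ^ N ≤ ‖q - 1‖ * 1 := by
              gcongr; exact pow_le_one₀ hc0 hc1.le
        _ = ‖q - 1‖ := mul_one _
        _ ≤ c := le_max_right _ _
      calc ‖q ^ p ^ N - 1‖ * max ‖(p : ℚ_[p])‖ ‖q ^ p ^ N - 1‖
          ≤ (‖q - 1‖ * c ^ N) * c :=
            mul_le_mul ih hmax (le_max_of_le_left (norm_nonneg _)) (by positivity)
      _ = ‖q - 1‖ * c ^ (N + 1) := by ring
  rw [tendsto_iff_norm_sub_tendsto_zero]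
  refine squeeze_zero (fun N => norm_nonneg _) key ?_
  have : Tendsto (fun N : ℕ => c ^ N) atTop (nhds 0) :=
    tendsto_pow_atTop_nhds_zero_of_lt_one hc0 hc1
  simpa using this.const_mul ‖q - 1‖

private lemma fqi_sum_identity {p : ℕ} [Fact p.Prime] (q : ℚ_[p]) (f : ℤ_[p] → ℚ_[p]) (n : ℕ) :
    q * ∑ x ∈ Finset.range n, f ((x : ℤ_[p]) + 1) * (-q) ^ x +
      ∑ x ∈ Finset.range n, f (x : ℤ_[p]) * (-q) ^ x
    = f 0 - f (n : ℤ_[p]) * (-q) ^ n := by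
  set g : ℕ → ℚ_[p] := fun x => f (x : ℤ_[p]) * (-q) ^ x with hg
  have h1 : q * ∑ x ∈ Finset.range n, f ((x : ℤ_[p]) + 1) * (-q) ^ x
      = - ∑ x ∈ Finset.range n, g (x + 1) := by
    rw [Finset.mul_sum, ← Finset.sum_neg_distrib]
    refine Finset.sum_congr rfl fun x _ => ?_
    have hcast : ((x : ℤ_[p]) + 1) = ((x + 1 : ℕ) : ℤ_[p]) := by push_cast; ring
    rw [hg]
    simp only [hcast]
    ring
  have h2 := Finset.sum_range_succ' g n
  have h3 := Finset.sum_range_succ g n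
  have h4 : ∑ x ∈ Finset.range n, g (x + 1) = ∑ x ∈ Finset.range n, g x + g n - g 0 := by
    rw [← h3, h2]; ring
  rw [h1, h4]
  have h0 : g 0 = f 0 := by simp [hg]
  have hn : g n = f (n : ℤ_[p]) * (-q) ^ n := rfl
  rw [h0, hn]
  ring

/-- Theorem 2: `q I_{-q}(f₁) + I_{-q}(f) = [2]_q f(0)` where `f₁(x) = f(x+1)`. -/
theorem fermionic_q_integral_functional_equation (p : ℕ) [Fact p.Prime] (hodd : Odd p)
    (q : ℚ_[p]) (hq : ‖1 - q‖ < 1)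
    (f : ℤ_[p] → ℚ_[p]) (hf : Continuous f) :
    Tendsto (fun N : ℕ =>
        ((1 + q) / (1 + q ^ p ^ N)) *
          (q * ∑ x ∈ Finset.range (p ^ N), f ((x : ℤ_[p]) + 1) * (-q) ^ x +
            ∑ x ∈ Finset.range (p ^ N), f (x : ℤ_[p]) * (-q) ^ x))
      atTop (nhds ((1 + q) * f 0)) := by
  have hq' : ‖q - 1‖ < 1 := by rwa [norm_sub_rev]
  -- rewrite the summand using the telescoping identity
  have hrw : ∀ N : ℕ,
      ((1 + q) / (1 + q ^ p ^ N)) *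
        (q * ∑ x ∈ Finset.range (p ^ N), f ((x : ℤ_[p]) + 1) * (-q) ^ x +
          ∑ x ∈ Finset.range (p ^ N), f (x : ℤ_[p]) * (-q) ^ x)
      = ((1 + q) / (1 + q ^ p ^ N)) * (f 0 + f ((p ^ N : ℕ) : ℤ_[p]) * q ^ p ^ N) := by
    intro N
    rw [fqi_sum_identity q f (p ^ N)]
    have hoddpn : Odd (p ^ N) := hodd.pow
    rw [hoddpn.neg_pow]
    ring
  simp only [hrw]
  -- limits
  have hqlim : Tendsto (fun N : ℕ => q ^ p ^ N) atTop (nhds 1) := fqi_tendsto_pow_p_pow hq'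
  have hplim : Tendsto (fun N : ℕ => ((p ^ N : ℕ) : ℤ_[p])) atTop (nhds 0) := by
    have hnorm : ‖(p : ℤ_[p])‖ < 1 := by
      rw [PadicInt.norm_p]
      have h1 : (1 : ℝ) < p := by exact_mod_cast (Fact.out : p.Prime).one_lt
      exact inv_lt_one_of_one_lt₀ h1
    have := tendsto_pow_atTop_nhds_zero_of_norm_lt_one hnorm
    simpa [Nat.cast_pow] using this
  have hflim : Tendsto (fun N : ℕ => f ((p ^ N : ℕ) : ℤ_[p])) atTop (nhds (f 0)) :=
    (hf.tendsto 0).comp hplim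
  have hden : Tendsto (fun N : ℕ => (1 : ℚ_[p]) + q ^ p ^ N) atTop (nhds 2) := by
    have := hqlim.const_add (1 : ℚ_[p])
    norm_num at this ⊢
    exact this
  have h2 : (2 : ℚ_[p]) ≠ 0 := two_ne_zero
  have hfrac : Tendsto (fun N : ℕ => (1 + q) / (1 + q ^ p ^ N)) atTop (nhds ((1 + q) / 2)) :=
    (tendsto_const_nhds.div hden h2)
  have hsecond : Tendsto (fun N : ℕ => f 0 + f ((p ^ N : ℕ) : ℤ_[p]) * q ^ p ^ N)
      atTop (nhds (f 0 + f 0 * 1)) :=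
    tendsto_const_nhds.add (hflim.mul hqlim)
  have := hfrac.mul hsecond
  have hval : (1 + q) / 2 * (f 0 + f 0 * 1) = (1 + q) * f 0 := by
    field_simp
    ring
  rwa [hval] at this
end

section
/- Let p be an odd prime. For every continuous function f : ℤ_p → ℚ_p, the sequence N ↦ Σ_{x=0}^{p^N - 1} f(x)·(-1)^x converges in ℚ_p as N → ∞ (here x runs over the natural numbers 0, 1, …, p^N − 1, regarded as elements of ℤ_p). This limit defines the fermionic p-adic integral I_{-1}(f) = ∫_{ℤ_p} f(x) dμ_{-1}(x). -/
open Filter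

private lemma sum_range_mul_decomp {M : Type*} [AddCommMonoid M] (g : ℕ → M) (m n : ℕ) :
    ∑ x ∈ Finset.range (m * n), g x
      = ∑ a ∈ Finset.range m, ∑ b ∈ Finset.range n, g (a + m * b) := by
  rcases Nat.eq_zero_or_pos m with hm | hm
  · simp [hm]
  rw [show (∑ a ∈ Finset.range m, ∑ b ∈ Finset.range n, g (a + m * b))
      = ∑ q ∈ Finset.range m ×ˢ Finset.range n, g (q.1 + m * q.2) from
    (Finset.sum_product _ _ (fun q => g (q.1 + m * q.2))).symm]
  refine Finset.sum_nbij' (fun x => (x % m, x / m)) (fun q => q.1 + m * q.2) ?_ ?_ ?_ ?_ ?_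
  · intro x hx
    simp only [Finset.mem_range] at hx
    simp only [Finset.mem_product, Finset.mem_range]
    exact ⟨Nat.mod_lt _ hm, Nat.div_lt_of_lt_mul (by omega)⟩
  · intro q hq
    simp only [Finset.mem_product, Finset.mem_range] at hq
    simp only [Finset.mem_range]
    calc q.1 + m * q.2 < m + m * q.2 := by omega
      _ = m * (q.2 + 1) := by ring
      _ ≤ m * n := Nat.mul_le_mul_left m hq.2
  · intro x _
    exact Nat.mod_add_div x m
  · intro q hq
    simp only [Finset.mem_product, Finset.mem_range] at hq
    have h1 : (q.1 + m * q.2) % m = q.1 := by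
      rw [Nat.add_mul_mod_self_left, Nat.mod_eq_of_lt hq.1]
    have h2 : (q.1 + m * q.2) / m = q.2 := by
      rw [Nat.add_mul_div_left _ _ hm, Nat.div_eq_of_lt hq.1, zero_add]
    simp [h1, h2]
  · intro x _
    simp only []
    rw [Nat.mod_add_div x m]

/-- Existence of the fermionic `p`-adic integral `I_{-1}(f)`. -/
theorem fermionic_integral_exists (p : ℕ) [Fact p.Prime] (hodd : Odd p)
    (f : ℤ_[p] → ℚ_[p]) (hf : Continuous f) :
    ∃ I : ℚ_[p],
      Tendsto (fun N : ℕ =>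
          ∑ x ∈ Finset.range (p ^ N), f (x : ℤ_[p]) * (-1 : ℚ_[p]) ^ x)
        atTop (nhds I) := by
  set S : ℕ → ℚ_[p] :=
    fun N => ∑ x ∈ Finset.range (p ^ N), f (x : ℤ_[p]) * (-1 : ℚ_[p]) ^ x with hS
  set d : ℕ → ℚ_[p] := fun N => S (N + 1) - S N with hd
  -- key formula for the consecutive difference
  have key : ∀ N, d N = ∑ a ∈ Finset.range (p ^ N), ∑ b ∈ Finset.range p,
      (f ((a + p ^ N * b : ℕ) : ℤ_[p]) - f (a : ℤ_[p])) * ((-1 : ℚ_[p]) ^ a * (-1 : ℚ_[p]) ^ b) := by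
    intro N
    have h1 : S (N + 1) = ∑ a ∈ Finset.range (p ^ N), ∑ b ∈ Finset.range p,
        f ((a + p ^ N * b : ℕ) : ℤ_[p]) * ((-1 : ℚ_[p]) ^ a * (-1 : ℚ_[p]) ^ b) := by
      rw [hS]
      simp only [pow_succ]
      rw [sum_range_mul_decomp (fun x => f (x : ℤ_[p]) * (-1 : ℚ_[p]) ^ x) (p ^ N) p]
      refine Finset.sum_congr rfl fun a _ => Finset.sum_congr rfl fun b _ => ?_
      rw [pow_add, pow_mul, (hodd.pow).neg_one_pow]
    have h2 : S N = ∑ a ∈ Finset.range (p ^ N), ∑ b ∈ Finset.range p,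
        f (a : ℤ_[p]) * ((-1 : ℚ_[p]) ^ a * (-1 : ℚ_[p]) ^ b) := by
      rw [hS]
      refine Finset.sum_congr rfl fun a _ => ?_
      rw [← Finset.mul_sum, ← Finset.mul_sum, neg_one_geom_sum,
        if_neg (Nat.not_even_iff_odd.mpr hodd), mul_one]
    show S (N + 1) - S N = _
    rw [h1, h2, ← Finset.sum_sub_distrib]
    refine Finset.sum_congr rfl fun a _ => ?_
    rw [← Finset.sum_sub_distrib]
    exact Finset.sum_congr rfl fun b _ => (sub_mul _ _ _).symm
  have hp1 : (1 : ℝ) < p := by exact_mod_cast (Fact.out : p.Prime).one_lt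
  -- the differences tend to zero
  have hdz : Tendsto d atTop (nhds 0) := by
    rw [NormedAddCommGroup.tendsto_nhds_zero]
    intro ε hε
    obtain ⟨δ, hδ0, hδ⟩ := Metric.uniformContinuous_iff.mp
      (CompactSpace.uniformContinuous_of_continuous hf) (ε / 2) (by positivity)
    have hgeo : Tendsto (fun N : ℕ => ((p : ℝ)⁻¹) ^ N) atTop (nhds 0) :=
      tendsto_pow_atTop_nhds_zero_of_lt_one (by positivity)
        (by rw [inv_lt_one_iff₀]; right; exact hp1)
    obtain ⟨N₀, hN₀⟩ := Metric.tendsto_atTop.mp hgeo δ hδ0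
    filter_upwards [eventually_ge_atTop N₀] with N hN
    have hpN : ((p : ℝ)⁻¹) ^ N < δ := by
      have := hN₀ N hN
      rwa [Real.dist_eq, sub_zero, abs_of_nonneg (by positivity)] at this
    have hbound : ‖d N‖ ≤ ε / 2 := by
      rw [key N]
      refine IsUltrametricDist.norm_sum_le_of_forall_le_of_nonneg (by positivity)
        fun a _ => ?_
      refine IsUltrametricDist.norm_sum_le_of_forall_le_of_nonneg (by positivity)
        fun b _ => ?_
      rw [norm_mul, norm_mul, norm_pow, norm_pow, norm_neg, norm_one, one_pow, one_pow,
        mul_one, mul_one]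
      have hdist : dist ((a + p ^ N * b : ℕ) : ℤ_[p]) ((a : ℕ) : ℤ_[p]) < δ := by
        rw [dist_eq_norm]
        have hcast : ((a + p ^ N * b : ℕ) : ℤ_[p]) - ((a : ℕ) : ℤ_[p])
            = (p : ℤ_[p]) ^ N * (b : ℤ_[p]) := by push_cast; ring
        rw [hcast]
        calc ‖(p : ℤ_[p]) ^ N * (b : ℤ_[p])‖
            = ‖(p : ℤ_[p]) ^ N‖ * ‖((b : ℕ) : ℤ_[p])‖ := norm_mul _ _
          _ ≤ ‖(p : ℤ_[p]) ^ N‖ * 1 :=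
              mul_le_mul_of_nonneg_left (PadicInt.norm_le_one _) (norm_nonneg _)
          _ = ((p : ℝ)⁻¹) ^ N := by
              rw [mul_one, PadicInt.norm_p_pow, zpow_neg, zpow_natCast, ← inv_pow]
          _ < δ := hpN
      have := hδ hdist
      rw [dist_eq_norm] at this
      exact this.le
    exact lt_of_le_of_lt hbound (by linarith)
  -- sum up the differences
  have hsum : Summable d :=
    NonarchimedeanAddGroup.summable_of_tendsto_cofinite_zero
      (by rwa [Nat.cofinite_eq_atTop])
  have hpartial : Tendsto (fun N => ∑ i ∈ Finset.range N, d i) atTop (nhds (∑' n, d n)) :=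
    hsum.hasSum.tendsto_sum_nat
  refine ⟨∑' n, d n + S 0, ?_⟩
  have hSrw : ∀ N, (∑ i ∈ Finset.range N, d i) + S 0 = S N := by
    intro N
    have : ∑ i ∈ Finset.range N, d i = S N - S 0 := Finset.sum_range_sub S N
    rw [this, sub_add_cancel]
  exact (hpartial.add_const (S 0)).congr hSrw
end

section
/- Let p be an odd prime. For every continuous function f : ℤ_p → ℚ_p, the sequence N ↦ ( Σ_{x=0}^{p^N - 1} f(x+1)·(-1)^x + Σ_{x=0}^{p^N - 1} f(x)·(-1)^x ) converges to 2·f(0) in ℚ_p. Equivalently, I_{-1}(f_1) + I_{-1}(f) = 2 f(0), where f_1(x) = f(x+1) and I_{-1}(g) = lim_{N→∞} Σ_{x=0}^{p^N-1} g(x)(-1)^x. -/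
open Filter

lemma fermionic_aux_sum {K : Type*} [Field K] (g : ℕ → K) (n : ℕ) :
    ∑ x ∈ Finset.range (n + 1), g (x + 1) * (-1 : K) ^ x +
      ∑ x ∈ Finset.range (n + 1), g x * (-1 : K) ^ x
    = g 0 + (-1 : K) ^ n * g (n + 1) := by
  induction n with
  | zero => simp [add_comm]
  | succ n ih =>
    rw [Finset.sum_range_succ, Finset.sum_range_succ (fun x => g x * (-1 : K) ^ x)]
    linear_combination ih

/-- `I_{-1}(f₁) + I_{-1}(f) = 2 f(0)` where `f₁(x) = f(x+1)`. -/
theorem fermionic_integral_functional_equation (p : ℕ) [Fact p.Prime] (hodd : Odd p)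
    (f : ℤ_[p] → ℚ_[p]) (hf : Continuous f) :
    Tendsto (fun N : ℕ =>
        ∑ x ∈ Finset.range (p ^ N), f ((x : ℤ_[p]) + 1) * (-1 : ℚ_[p]) ^ x +
          ∑ x ∈ Finset.range (p ^ N), f (x : ℤ_[p]) * (-1 : ℚ_[p]) ^ x)
      atTop (nhds (2 * f 0)) := by
  have hp : 0 < p := (Fact.out : p.Prime).pos
  have key : ∀ N : ℕ,
      (∑ x ∈ Finset.range (p ^ N), f ((x : ℤ_[p]) + 1) * (-1 : ℚ_[p]) ^ x +
        ∑ x ∈ Finset.range (p ^ N), f (x : ℤ_[p]) * (-1 : ℚ_[p]) ^ x)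
      = f 0 + f ((p : ℤ_[p]) ^ N) := by
    intro N
    obtain ⟨n, hn⟩ : ∃ n, p ^ N = n + 1 :=
      ⟨p ^ N - 1, (Nat.succ_pred_eq_of_pos (pow_pos hp N)).symm⟩
    have := fermionic_aux_sum (fun x : ℕ => f (x : ℤ_[p])) n
    rw [hn]
    have hcast : ∀ x : ℕ, ((x + 1 : ℕ) : ℤ_[p]) = (x : ℤ_[p]) + 1 := by intro x; push_cast; ring
    simp only [hcast] at this
    rw [this]
    have hodd' : Odd (n + 1) := hn ▸ hodd.pow
    have heven : Even n := by
      rcases Nat.even_or_odd n with h | h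
      · exact h
      · exact absurd (h.add_one) (by simpa using hodd')
    rw [heven.neg_one_pow, one_mul]
    congr 1
    rw [← hcast n]; congr 1; exact_mod_cast hn.symm
  simp only [key]
  have h0 : Tendsto (fun N : ℕ => (p : ℤ_[p]) ^ N) atTop (nhds 0) := by
    apply tendsto_pow_atTop_nhds_zero_of_norm_lt_one
    rw [PadicInt.norm_p]
    exact inv_lt_one_of_one_lt₀ (by exact_mod_cast (Fact.out : p.Prime).one_lt)
  have := ((hf.tendsto 0).comp h0).const_add (f 0)
  rw [two_mul]
  exact this
end

section
/- Let p be an odd prime, let q ∈ ℚ_p with q ≠ 1 satisfy ‖1 - q‖_p < 1, and for each natural number m put E_m = (1+q)·(1/(1-q))^m · Σ_{k=0}^{m} (m choose k)·(-1)^k/(1 + q^{k+1}) ∈ ℚ_p (the closed form of the q-Euler number E_{m,q}). Then for every natural number n, q · Σ_{k=0}^{n} (n choose k) · q^k · E_k + E_n = (1+q) if n = 0, and q · Σ_{k=0}^{n} (n choose k) · q^k · E_k + E_n = 0 if n ≥ 1. (This is the coefficientwise form of the q-difference equation F_q(t) = −q e^t F_q(qt) + 1 for the generating function F_q(t) = Σ_{k≥0}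 E_{k,q} t^k/k!.) -/
open Finset

private lemma q_euler_inner {K : Type*} [Field K] (q A : K) (hA : 1 + q * A = A)
    {j n : ℕ} (hj : j ≤ n) :
    ∑ k ∈ Finset.Ico j (n + 1), ((n.choose k * k.choose j : ℕ) : K) * q ^ (k + 1) * A ^ k =
      (n.choose j : K) * q ^ (j + 1) * A ^ n := by
  rw [Finset.sum_Ico_eq_sum_range]
  have hnj : n + 1 - j = (n - j) + 1 := by omega
  rw [hnj]
  have key : ∀ i ∈ Finset.range (n - j + 1),
      ((n.choose (j + i) * (j + i).choose j : ℕ) : K) * q ^ (j + i + 1) * A ^ (j + i)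
        = (n.choose j : K) * q ^ (j + 1) * A ^ j * (((n - j).choose i : K) * (q * A) ^ i) := by
    intro i hi
    rw [Finset.mem_range] at hi
    have hcm : n.choose (j + i) * (j + i).choose j = n.choose j * (n - j).choose i := by
      rw [Nat.choose_mul (by omega), Nat.add_sub_cancel_left]
    rw [hcm]
    push_cast
    ring
  rw [Finset.sum_congr rfl key, ← Finset.mul_sum]
  have hbin : ∑ i ∈ Finset.range (n - j + 1), ((n - j).choose i : K) * (q * A) ^ i
      = (q * A + 1) ^ (n - j) := by
    rw [add_pow]
    refine Finset.sum_congr rfl fun i hi => ?_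
    simp [mul_comm]
  rw [hbin]
  have h2 : q * A + 1 = A := by linear_combination hA
  rw [h2]
  have hpow : A ^ j * A ^ (n - j) = A ^ n := by
    rw [← pow_add]
    congr 1
    omega
  linear_combination (n.choose j : K) * q ^ (j + 1) * hpow

/-- Coefficientwise form of the `q`-difference equation `F_q(t) = -q eᵗ F_q(qt) + 1`:
`q ∑_{k=0}^n (n choose k) q^k E_k + E_n` equals `1+q` for `n = 0` and `0` for `n ≥ 1`. -/
theorem q_euler_recurrence (p : ℕ) [Fact p.Prime] (hodd : Odd p)
    (q : ℚ_[p]) (hq1 : q ≠ 1) (hq : ‖1 - q‖ < 1)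
    (E : ℕ → ℚ_[p])
    (hE : ∀ m : ℕ, E m = (1 + q) * (1 / (1 - q)) ^ m *
      ∑ k ∈ Finset.range (m + 1),
        (m.choose k : ℚ_[p]) * (-1 : ℚ_[p]) ^ k / (1 + q ^ (k + 1)))
    (n : ℕ) :
    q * ∑ k ∈ Finset.range (n + 1), (n.choose k : ℚ_[p]) * q ^ k * E k + E n =
      if n = 0 then 1 + q else 0 := by
  have h1q : (1 : ℚ_[p]) - q ≠ 0 := sub_ne_zero_of_ne (Ne.symm hq1)
  set A : ℚ_[p] := (1 - q)⁻¹ with hAdef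
  have hA : 1 + q * A = A := by
    have hmA : (1 - q) * A = 1 := mul_inv_cancel₀ h1q
    linear_combination -hmA
  -- ‖q‖ = 1
  have hqnorm : ‖q‖ = 1 := by
    have hqe : q = 1 + (-(1 - q)) := by ring
    rw [hqe, Padic.add_eq_max_of_ne]
    · simp only [norm_one, norm_neg]
      exact max_eq_left hq.le
    · simp only [norm_one, norm_neg]
      exact fun h => absurd (h ▸ hq) (lt_irrefl _)
  -- ‖q^k - 1‖ < 1 for all k ≥ 1, hence 1 + q^(j+1) ≠ 0
  have hpow1 : ∀ k : ℕ, ‖q ^ k - 1‖ < 1 := by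
    intro k
    induction k with
    | zero => simpa using zero_lt_one
    | succ k ih =>
      have hsplit : q ^ (k + 1) - 1 = q ^ k * (q - 1) + (q ^ k - 1) := by ring
      rw [hsplit]
      refine lt_of_le_of_lt (Padic.nonarchimedean _ _) (max_lt ?_ ih)
      rw [norm_mul, norm_pow, hqnorm, one_pow, one_mul, norm_sub_rev]
      exact hq
  have h2norm : ‖(2 : ℚ_[p])‖ = 1 := by
    have h2i : ((2 : ℤ) : ℚ_[p]) = (2 : ℚ_[p]) := by norm_cast
    have hle : ‖(2 : ℚ_[p])‖ ≤ 1 := by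
      rw [← h2i]; exact Padic.norm_int_le_one _
    have hnlt : ¬ ‖(2 : ℚ_[p])‖ < 1 := by
      rw [← h2i, Padic.norm_intCast_lt_one_iff]
      intro hdvd
      have hp2 : p ∣ 2 := by exact_mod_cast hdvd
      have := (Nat.prime_dvd_prime_iff_eq (Fact.out) Nat.prime_two).mp hp2
      rw [this] at hodd
      exact (Nat.not_odd_iff_even.mpr (by norm_num)) hodd
    exact le_antisymm hle (not_lt.mp hnlt)
  have hne : ∀ j : ℕ, (1 : ℚ_[p]) + q ^ (j + 1) ≠ 0 := by
    intro j
    have hrw : (1 : ℚ_[p]) + q ^ (j + 1) = 2 + (q ^ (j + 1) - 1) := by ring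
    have hnorm : ‖(1 : ℚ_[p]) + q ^ (j + 1)‖ = 1 := by
      rw [hrw, Padic.add_eq_max_of_ne]
      · rw [h2norm]
        exact max_eq_left ((hpow1 (j + 1)).le)
      · rw [h2norm]
        exact fun h => absurd (h ▸ hpow1 (j + 1)) (lt_irrefl _)
    intro h0
    rw [h0, norm_zero] at hnorm
    exact zero_ne_one hnorm
  -- abbreviation
  set c : ℕ → ℚ_[p] := fun j => (-1 : ℚ_[p]) ^ j / (1 + q ^ (j + 1)) with hcdef
  have hEr : ∀ m : ℕ, E m = (1 + q) * A ^ m *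
      ∑ j ∈ Finset.range (m + 1), (m.choose j : ℚ_[p]) * c j := by
    intro m
    rw [hE m, one_div]
    congr 1
    exact Finset.sum_congr rfl fun j _ => (mul_div_assoc _ _ _)
  -- step 1: expand the first sum into a double sum
  have step1 : q * ∑ k ∈ Finset.range (n + 1), (n.choose k : ℚ_[p]) * q ^ k * E k
      = (1 + q) * ∑ k ∈ Finset.range (n + 1), ∑ j ∈ Finset.range (k + 1),
          ((n.choose k * k.choose j : ℕ) : ℚ_[p]) * q ^ (k + 1) * A ^ k * c j := by
    simp only [hEr, Finset.mul_sum]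
    refine Finset.sum_congr rfl fun k _ => Finset.sum_congr rfl fun j _ => ?_
    push_cast
    ring
  -- step 2: swap the double sum
  have step2 : ∑ k ∈ Finset.range (n + 1), ∑ j ∈ Finset.range (k + 1),
        ((n.choose k * k.choose j : ℕ) : ℚ_[p]) * q ^ (k + 1) * A ^ k * c j
      = ∑ j ∈ Finset.range (n + 1), (∑ k ∈ Finset.Ico j (n + 1),
          ((n.choose k * k.choose j : ℕ) : ℚ_[p]) * q ^ (k + 1) * A ^ k) * c j := by
    simp only [Finset.range_eq_Ico]
    rw [← Finset.sum_Ico_Ico_comm 0 (n + 1)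
      (fun j k => ((n.choose k * k.choose j : ℕ) : ℚ_[p]) * q ^ (k + 1) * A ^ k * c j)]
    refine Finset.sum_congr rfl fun j _ => ?_
    rw [Finset.sum_mul]
  -- step 3: evaluate the inner sums
  have step3 : ∀ j ∈ Finset.range (n + 1),
      (∑ k ∈ Finset.Ico j (n + 1),
          ((n.choose k * k.choose j : ℕ) : ℚ_[p]) * q ^ (k + 1) * A ^ k) * c j
        = (n.choose j : ℚ_[p]) * q ^ (j + 1) * A ^ n * c j := by
    intro j hj
    rw [Finset.mem_range] at hj
    rw [q_euler_inner q A hA (by omega)]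
  -- put everything together
  rw [step1, step2, Finset.sum_congr rfl step3, hEr n, Finset.mul_sum, Finset.mul_sum, ← Finset.sum_add_distrib]
  have step4 : ∀ j ∈ Finset.range (n + 1),
      (1 + q) * ((n.choose j : ℚ_[p]) * q ^ (j + 1) * A ^ n * c j)
        + (1 + q) * A ^ n * ((n.choose j : ℚ_[p]) * c j)
      = (1 + q) * A ^ n * ((n.choose j : ℚ_[p]) * (-1 : ℚ_[p]) ^ j) := by
    intro j _
    have hcj : c j * (1 + q ^ (j + 1)) = (-1 : ℚ_[p]) ^ j := by
      rw [hcdef]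
      exact div_mul_cancel₀ _ (hne j)
    calc (1 + q) * ((n.choose j : ℚ_[p]) * q ^ (j + 1) * A ^ n * c j)
          + (1 + q) * A ^ n * ((n.choose j : ℚ_[p]) * c j)
        = (1 + q) * A ^ n * ((n.choose j : ℚ_[p]) * (c j * (1 + q ^ (j + 1)))) := by ring
      _ = (1 + q) * A ^ n * ((n.choose j : ℚ_[p]) * (-1 : ℚ_[p]) ^ j) := by rw [hcj]
  rw [Finset.sum_congr rfl step4, ← Finset.mul_sum]
  have halt : ∑ j ∈ Finset.range (n + 1), (n.choose j : ℚ_[p]) * (-1 : ℚ_[p]) ^ j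
      = if n = 0 then 1 else 0 := by
    have := Int.alternating_sum_range_choose (n := n)
    have hcast : ((∑ i ∈ Finset.range (n + 1), (-1 : ℤ) ^ i * n.choose i : ℤ) : ℚ_[p])
        = ∑ j ∈ Finset.range (n + 1), (n.choose j : ℚ_[p]) * (-1 : ℚ_[p]) ^ j := by
      push_cast
      exact Finset.sum_congr rfl fun j _ => by ring
    rw [← hcast, this]
    split_ifs <;> norm_num
  rw [halt]
  by_cases hn : n = 0
  · subst hn
    simp
  · simp [hn]
end

section
/- Let p be an odd prime, let d be an odd positive integer coprime to p, let χ be a Dirichlet character modulo d with values in ℚ_p, let m be a natural number, and let q ∈ ℚ_p with q ≠ 1 satisfy ‖1 - q‖_p < 1. Then the sequence N ↦ ((1+q)/(1 + q^{d p^N})) · Σ_{a=0}^{d p^N - 1} χ(a) · [a]_q^m · (-q)^a converges in ℚ_p as N → ∞. This limit defines the generalized q-Euler number E_{m,χ,q} attached to χ. -/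
open Filter Finset


section
variable {p : ℕ} [Fact p.Prime] {q : ℚ_[p]}

private lemma padic_norm_sum_le {s : Finset ℕ} {f : ℕ → ℚ_[p]} {C : ℝ}
    (hC : 0 ≤ C) (h : ∀ i ∈ s, ‖f i‖ ≤ C) : ‖∑ i ∈ s, f i‖ ≤ C := by
  classical
  induction s using Finset.induction_on with
  | empty => simpa using hC
  | insert _ _ hx ih =>
    rename_i a s'
    rw [Finset.sum_insert hx]
    exact (Padic.nonarchimedean _ _).trans
      (max_le (h a (Finset.mem_insert_self _ _)) (ih fun i hi => h i (Finset.mem_insert_of_mem hi)))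

private lemma padic_norm_one_sub_pow {u : ℚ_[p]} (hu : ‖u‖ ≤ 1) (j : ℕ) :
    ‖1 - u ^ j‖ ≤ ‖1 - u‖ := by
  have h : 1 - u ^ j = (1 - u) * ∑ i ∈ Finset.range j, u ^ i := by
    linear_combination geom_sum_mul u j
  rw [h, norm_mul]
  calc ‖1 - u‖ * ‖∑ i ∈ Finset.range j, u ^ i‖ ≤ ‖1 - u‖ * 1 := by
        refine mul_le_mul_of_nonneg_left ?_ (norm_nonneg _)
        exact padic_norm_sum_le zero_le_one fun i _ => by
          rw [norm_pow]; exact pow_le_one₀ (norm_nonneg _) hu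
    _ = ‖1 - u‖ := mul_one _

private lemma padic_norm_pow_sub_pow {x y : ℚ_[p]} (hx : ‖x‖ ≤ 1)
    (hy : ‖y‖ ≤ 1) (m : ℕ) : ‖x ^ m - y ^ m‖ ≤ ‖x - y‖ := by
  rw [← geom_sum₂_mul x y m, norm_mul]
  calc ‖∑ i ∈ Finset.range m, x ^ i * y ^ (m - 1 - i)‖ * ‖x - y‖ ≤ 1 * ‖x - y‖ := by
        refine mul_le_mul_of_nonneg_right ?_ (norm_nonneg _)
        refine padic_norm_sum_le zero_le_one fun i _ => ?_
        rw [norm_mul, norm_pow, norm_pow]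
        exact mul_le_one₀ (pow_le_one₀ (norm_nonneg _) hx) (by positivity)
          (pow_le_one₀ (norm_nonneg _) hy)
    _ = ‖x - y‖ := one_mul _

private lemma sum_range_mul_index {β : Type*} [AddCommMonoid β] (f : ℕ → β) (M K : ℕ) :
    ∑ a ∈ Finset.range (M * K), f a
      = ∑ i ∈ Finset.range M, ∑ b ∈ Finset.range K, f (i * K + b) := by
  induction M with
  | zero => simp
  | succ M ih => rw [Nat.succ_mul, Finset.sum_range_add, ih, Finset.sum_range_succ]

end



/-- Existence of the generalized `q`-Euler numbers `E_{m,χ,q}` attached to a Dirichlet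
character `χ` of odd conductor `d` coprime to `p`. -/
theorem generalized_q_euler_number_exists (p : ℕ) [Fact p.Prime] (hodd : Odd p)
    (d : ℕ) (hd : 0 < d) (hdodd : Odd d) (hdp : Nat.Coprime d p)
    (χ : DirichletCharacter ℚ_[p] d)
    (m : ℕ) (q : ℚ_[p]) (hq1 : q ≠ 1) (hq : ‖1 - q‖ < 1) :
    ∃ I : ℚ_[p],
      Tendsto (fun N : ℕ =>
          ((1 + q) / (1 + q ^ (d * p ^ N))) *
            ∑ a ∈ Finset.range (d * p ^ N),
              χ (a : ZMod d) * ((1 - q ^ a) / (1 - q)) ^ m * (-q) ^ a)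
        atTop (nhds I) := by
  have hp := (Fact.out : p.Prime)
  -- basic norms
  have h1q : (1 : ℚ_[p]) - q ≠ 0 := sub_ne_zero.mpr (Ne.symm hq1)
  have hq01 : 0 < ‖1 - q‖ := norm_pos_iff.mpr h1q
  have hqn : ‖q‖ = 1 := by
    have hle : ‖q‖ ≤ 1 := by
      have : q = 1 + -(1 - q) := by ring
      rw [this]
      refine (Padic.nonarchimedean _ _).trans (max_le (by simp) ?_)
      rw [norm_neg]; exact hq.le
    have hge : (1 : ℝ) ≤ max ‖q‖ ‖1 - q‖ := by
      have := Padic.nonarchimedean q (1 - q)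
      simpa using this
    rcases le_max_iff.mp hge with h | h
    · exact le_antisymm hle h
    · exact absurd h (not_le.mpr hq)
  have hqpow : ∀ k : ℕ, ‖q ^ k‖ = 1 := fun k => by rw [norm_pow, hqn, one_pow]
  have honesub : ∀ k : ℕ, ‖1 - q ^ k‖ ≤ ‖1 - q‖ :=
    fun k => padic_norm_one_sub_pow hqn.le k
  -- ‖2‖ = 1
  have h2 : ‖(2 : ℚ_[p])‖ = 1 := by
    have hle : ‖(2 : ℚ_[p])‖ ≤ 1 := by
      have := Padic.norm_int_le_one (p := p) 2
      simpa using this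
    have hnlt : ¬ ‖(2 : ℚ_[p])‖ < 1 := by
      intro hlt
      have : (p : ℤ) ∣ 2 := by
        rw [← Padic.norm_intCast_lt_one_iff]
        simpa using hlt
      have hpd : p ∣ 2 := by exact_mod_cast this
      have hp2 : p = 2 := (Nat.prime_dvd_prime_iff_eq hp Nat.prime_two).mp hpd
      rw [hp2] at hodd
      exact (by decide : ¬ Odd 2) hodd
    exact le_antisymm hle (not_lt.mp hnlt)
  have hone_add : ∀ k : ℕ, ‖1 + q ^ k‖ = 1 := by
    intro k
    have he : 1 + q ^ k = 2 - (1 - q ^ k) := by ring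
    have hx : ‖1 - q ^ k‖ < 1 := lt_of_le_of_lt (honesub k) hq
    have hle : ‖1 + q ^ k‖ ≤ 1 := by
      rw [he, sub_eq_add_neg]
      refine (Padic.nonarchimedean _ _).trans (max_le (le_of_eq h2) ?_)
      rw [norm_neg]; exact hx.le
    have hge : (1 : ℝ) ≤ ‖1 + q ^ k‖ := by
      have : (2 : ℚ_[p]) = (1 + q ^ k) + (1 - q ^ k) := by ring
      have h' := Padic.nonarchimedean (1 + q ^ k) (1 - q ^ k)
      rw [← this, h2] at h'
      rcases le_max_iff.mp h' with h | h
      · exact h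
      · exact absurd h (not_le.mpr hx)
    exact le_antisymm hle hge
  have hone_add_ne : ∀ k : ℕ, (1 : ℚ_[p]) + q ^ k ≠ 0 := by
    intro k h
    have := hone_add k
    rw [h, norm_zero] at this
    exact one_ne_zero this.symm
  -- geometric decay
  set r : ℝ := max ((p : ℝ))⁻¹ ‖1 - q‖ with hrdef
  have hp1 : (1 : ℝ) < p := by exact_mod_cast hp.one_lt
  have hr1 : r < 1 := max_lt (inv_lt_one_of_one_lt₀ hp1) hq
  have hr0 : 0 ≤ r := le_max_of_le_right hq01.le
  have hdecay : ∀ k N : ℕ, ‖1 - q ^ (k * p ^ N)‖ ≤ ‖1 - q‖ * r ^ N := by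
    intro k N
    induction N with
    | zero => simpa using honesub k
    | succ N ih =>
      have hiq : ‖1 - q ^ (k * p ^ N)‖ ≤ ‖1 - q‖ :=
        ih.trans (by nlinarith [pow_le_one₀ hr0 hr1.le (n := N)])
      set u : ℚ_[p] := q ^ (k * p ^ N) with hu
      have hu1 : ‖u‖ = 1 := hqpow _
      have hqs : q ^ (k * p ^ (N + 1)) = u ^ p := by
        rw [hu, ← pow_mul]
        ring_nf
      have key : 1 - u ^ p = (1 - u) * ∑ j ∈ Finset.range p, u ^ j := by
        linear_combination geom_sum_mul u p
      have hsum : ‖∑ j ∈ Finset.range p, u ^ j‖ ≤ r := by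
        have hrw : ∑ j ∈ Finset.range p, u ^ j
            = (p : ℚ_[p]) + ∑ j ∈ Finset.range p, (u ^ j - 1) := by
          rw [Finset.sum_sub_distrib]
          simp
        rw [hrw]
        refine (Padic.nonarchimedean _ _).trans (max_le ?_ ?_)
        · rw [Padic.norm_p]; exact le_max_left _ _
        · refine (padic_norm_sum_le hr0 fun j _ => ?_)
          rw [norm_sub_rev]
          exact ((padic_norm_one_sub_pow hu1.le j).trans hiq).trans (le_max_right _ _)
      calc ‖1 - q ^ (k * p ^ (N + 1))‖ = ‖1 - u‖ * ‖∑ j ∈ Finset.range p, u ^ j‖ := by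
            rw [hqs, key, norm_mul]
        _ ≤ (‖1 - q‖ * r ^ N) * r :=
            mul_le_mul ih hsum (norm_nonneg _) (by positivity)
        _ = ‖1 - q‖ * r ^ (N + 1) := by ring
  -- the q-analogue as a sum
  set E : ℕ → ℚ_[p] := fun a => (1 - q ^ a) / (1 - q) with hEdef
  have hE : ∀ a : ℕ, E a = ∑ j ∈ Finset.range a, q ^ j := by
    intro a
    rw [hEdef]
    rw [div_eq_iff h1q]
    linear_combination geom_sum_mul q a
  have hEnorm : ∀ a : ℕ, ‖E a‖ ≤ 1 := by
    intro a
    rw [hE]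
    exact padic_norm_sum_le zero_le_one fun j _ => le_of_eq (hqpow j)
  have hEadd : ∀ b c : ℕ, E (c + b) = E b + q ^ b * E c := by
    intro b c
    rw [hE, hE, hE, add_comm c b, Finset.sum_range_add, Finset.mul_sum]
    congr 1
    exact Finset.sum_congr rfl fun x _ => by rw [pow_add]
  -- the sequence
  set f : ℕ → ℚ_[p] := fun N =>
    ((1 + q) / (1 + q ^ (d * p ^ N))) *
      ∑ a ∈ Finset.range (d * p ^ N), χ (a : ZMod d) * E a ^ m * (-q) ^ a with hfdef
  suffices hcauchy : CauchySeq f by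
    obtain ⟨I, hI⟩ := cauchySeq_tendsto_of_complete hcauchy
    exact ⟨I, hI⟩
  refine cauchySeq_of_le_geometric r 1 hr1 fun N => ?_
  rw [dist_eq_norm, norm_sub_rev, one_mul]
  -- notation for this step
  set K : ℕ := d * p ^ N with hK
  have hKodd : Odd K := hdodd.mul (hodd.pow)
  set Q : ℚ_[p] := q ^ K with hQ
  have hQp : q ^ (d * p ^ (N + 1)) = Q ^ p := by
    rw [hQ, ← pow_mul, hK]
    ring_nf
  have hQn : ‖Q‖ = 1 := hqpow _
  have hqK : (-q) ^ K = -Q := by rw [hQ]; exact hKodd.neg_pow q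
  have hgeom : (∑ i ∈ Finset.range p, (-Q) ^ i) * (1 + Q) = 1 + Q ^ p := by
    have hnp : (-Q) ^ p = -(Q ^ p) := hodd.neg_pow Q
    linear_combination (-1 : ℚ_[p]) * geom_sum_mul (-Q) p - hnp
  have hchi : ∀ i b : ℕ, χ ((i * K + b : ℕ) : ZMod d) = χ ((b : ℕ) : ZMod d) := by
    intro i b
    congr 1
    have hdvd : ((K : ℕ) : ZMod d) = 0 := by
      rw [ZMod.natCast_eq_zero_iff]
      exact ⟨p ^ N, hK⟩
    push_cast
    rw [hdvd]
    ring
  -- rewrite f (N+1)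
  have e1 : f (N + 1) = ((1 + q) / (1 + Q ^ p)) *
      ∑ i ∈ Finset.range p, ∑ b ∈ Finset.range K,
        (χ ((b : ℕ) : ZMod d) * (-q) ^ b * (-Q) ^ i) * E (i * K + b) ^ m := by
    rw [hfdef]
    simp only []
    rw [hQp]
    congr 1
    have hsplit : d * p ^ (N + 1) = p * K := by rw [hK]; ring
    rw [hsplit, sum_range_mul_index]
    refine Finset.sum_congr rfl fun i _ => Finset.sum_congr rfl fun b _ => ?_
    rw [hchi i b]
    have : (-q) ^ (i * K + b) = (-Q) ^ i * (-q) ^ b := by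
      rw [pow_add, mul_comm i K, pow_mul, hqK]
    rw [this]
    ring
  -- rewrite f N
  have e2 : f N = ((1 + q) / (1 + Q ^ p)) *
      ∑ i ∈ Finset.range p, ∑ b ∈ Finset.range K,
        (χ ((b : ℕ) : ZMod d) * (-q) ^ b * (-Q) ^ i) * E b ^ m := by
    rw [hfdef]
    simp only []
    have hrw : ∀ i : ℕ, ∑ b ∈ Finset.range K,
        (χ ((b : ℕ) : ZMod d) * (-q) ^ b * (-Q) ^ i) * E b ^ m
        = (-Q) ^ i * ∑ b ∈ Finset.range K, χ ((b : ℕ) : ZMod d) * E b ^ m * (-q) ^ b := by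
      intro i
      rw [Finset.mul_sum]
      exact Finset.sum_congr rfl fun b _ => by ring
    have : ∑ i ∈ Finset.range p, ∑ b ∈ Finset.range K,
        (χ ((b : ℕ) : ZMod d) * (-q) ^ b * (-Q) ^ i) * E b ^ m
        = (∑ i ∈ Finset.range p, (-Q) ^ i) *
            ∑ b ∈ Finset.range K, χ ((b : ℕ) : ZMod d) * E b ^ m * (-q) ^ b := by
      rw [Finset.sum_mul]
      exact Finset.sum_congr rfl fun i _ => hrw i
    rw [this, ← hK, ← hQ]
    have hne1 : (1 : ℚ_[p]) + Q ≠ 0 := hone_add_ne K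
    have hne2 : (1 : ℚ_[p]) + Q ^ p ≠ 0 := by
      have := hone_add_ne (d * p ^ (N + 1))
      rwa [hQp] at this
    have hgeom' : (∑ i ∈ Finset.range p, (-Q) ^ i) = (1 + Q ^ p) / (1 + Q) :=
      (eq_div_iff hne1).mpr hgeom
    rw [hgeom']
    field_simp
  -- the difference
  have hdiffle : ‖f (N + 1) - f N‖ ≤ r ^ N := by
    rw [e1, e2, ← mul_sub, ← Finset.sum_sub_distrib]
    have hsum_eq : ∀ i ∈ Finset.range p,
        (∑ b ∈ Finset.range K, (χ ((b : ℕ) : ZMod d) * (-q) ^ b * (-Q) ^ i) * E (i * K + b) ^ m)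
          - ∑ b ∈ Finset.range K, (χ ((b : ℕ) : ZMod d) * (-q) ^ b * (-Q) ^ i) * E b ^ m
        = ∑ b ∈ Finset.range K,
            (χ ((b : ℕ) : ZMod d) * (-q) ^ b * (-Q) ^ i) * (E (i * K + b) ^ m - E b ^ m) := by
      intro i _
      rw [← Finset.sum_sub_distrib]
      exact Finset.sum_congr rfl fun b _ => by ring
    rw [norm_mul]
    have hC : ‖(1 + q) / (1 + Q ^ p)‖ = 1 := by
      rw [norm_div]
      have ha : ‖(1 : ℚ_[p]) + q‖ = 1 := by
        have := hone_add 1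
        rwa [pow_one] at this
      have hb : ‖(1 : ℚ_[p]) + Q ^ p‖ = 1 := by
        have := hone_add (d * p ^ (N + 1))
        rwa [hQp] at this
      rw [ha, hb, div_one]
    rw [hC, one_mul]
    refine padic_norm_sum_le (by positivity) fun i hi => ?_
    rw [hsum_eq i hi]
    refine padic_norm_sum_le (by positivity) fun b _ => ?_
    rw [norm_mul]
    have hb1 : ‖χ ((b : ℕ) : ZMod d) * (-q) ^ b * (-Q) ^ i‖ ≤ 1 := by
      rw [norm_mul, norm_mul, norm_pow, norm_pow, norm_neg, norm_neg, hqn, hQn]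
      simpa using χ.norm_le_one _
    have hb2 : ‖E (i * K + b) ^ m - E b ^ m‖ ≤ r ^ N := by
      refine (padic_norm_pow_sub_pow (hEnorm _) (hEnorm _) m).trans ?_
      have : E (i * K + b) - E b = q ^ b * E (i * K) := by
        rw [hEadd b (i * K)]; ring
      rw [this, norm_mul, hqpow, one_mul]
      have : ‖E (i * K)‖ ≤ r ^ N := by
        rw [hEdef]
        simp only []
        rw [norm_div]
        rw [div_le_iff₀ hq01]
        have : i * K = (i * d) * p ^ N := by rw [hK]; ring
        rw [this]
        calc ‖1 - q ^ (i * d * p ^ N)‖ ≤ ‖1 - q‖ * r ^ N := hdecay (i * d) N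
          _ = r ^ N * ‖1 - q‖ := by ring
      exact this
    calc ‖χ ((b : ℕ) : ZMod d) * (-q) ^ b * (-Q) ^ i‖ * ‖E (i * K + b) ^ m - E b ^ m‖
        ≤ 1 * (r ^ N) := mul_le_mul hb1 hb2 (norm_nonneg _) zero_le_one
      _ = r ^ N := one_mul _
  exact hdiffle
end
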